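/- arXiv:1907.12614 — 8 statements merged into one kernel-verified Lean document; each statement's English description precedes it below -/
import Mathlib

section
/- Every minimal counterexample to Conjecture C4 has strictly fewer arcs than every minimal counterexample to Conjecture C2. Precisely: if D is a digraph with S_D·𝟏 > 𝟎 such that every digraph with fewer arcs D′ satisfies S_{D′}·𝟏 ≯ 𝟎, and E is a digraph admitting no non-zero weight vector w with S_E·w ≤ 𝟎 such that every digraph with fewer arcs than E does admit such a weight vector, then E has strictly fewer arcs than D. -/
open Matrix

/-- A digraph whose underlying graph is simple: a finite vertex set with an
irreflexive arc relation having no pair of opposite arcs. -/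
structure SimpleDigraph (V : Type) where
  Adj : V → V → Prop
  loopless : ∀ v, ¬ Adj v v
  no_opposite : ∀ u v, Adj u v → ¬ Adj v u

namespace SimpleDigraph

variable {V : Type}

/-- `D.DistTwo u v` says that `v` is at out-distance exactly `2` from `u`,
i.e. the shortest directed path from `u` to `v` has length `2`. -/
def DistTwo (D : SimpleDigraph V) (u v : V) : Prop :=
  u ≠ v ∧ ¬ D.Adj u v ∧ ∃ w, D.Adj u w ∧ D.Adj w v

open Classical in
/-- The second-neighborhood matrix of a digraph: the `(i,j)` entry is `1` if
`d(i,j) = 1`, `-1` if `d(i,j) = 2`, and `0` otherwise. -/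
noncomputable def sMatrix (D : SimpleDigraph V) : Matrix V V ℝ :=
  Matrix.of fun i j => if D.Adj i j then 1 else if D.DistTwo i j then -1 else 0

/-- `d⁺(v)`, the number of vertices at out-distance `1` from `v`. -/
noncomputable def outDeg (D : SimpleDigraph V) (v : V) : ℕ :=
  Nat.card {u : V // D.Adj v u}

/-- `d⁺⁺(v)`, the number of vertices at out-distance `2` from `v`. -/
noncomputable def outDeg2 (D : SimpleDigraph V) (v : V) : ℕ :=
  Nat.card {u : V // D.DistTwo v u}

/-- `d⁻(v)`, the number of vertices at in-distance `1` from `v`. -/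
noncomputable def inDeg (D : SimpleDigraph V) (v : V) : ℕ :=
  Nat.card {u : V // D.Adj u v}

/-- `d⁻⁻(v)`, the number of vertices at in-distance `2` from `v`. -/
noncomputable def inDeg2 (D : SimpleDigraph V) (v : V) : ℕ :=
  Nat.card {u : V // D.DistTwo u v}

/-- The number of arcs of a digraph. -/
noncomputable def numArcs (D : SimpleDigraph V) : ℕ :=
  Nat.card {p : V × V // D.Adj p.1 p.2}

end SimpleDigraph

-- ===== auxiliary development =====


namespace SimpleDigraph

open Finset

variable {V : Type} (D : SimpleDigraph V)

open Classical in
lemma sMatrix_apply (i j : V) :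
    D.sMatrix i j = if D.Adj i j then 1 else if D.DistTwo i j then -1 else 0 := rfl

lemma sMatrix_eq_one (i j : V) (h : D.Adj i j) : D.sMatrix i j = 1 := by
  rw [D.sMatrix_apply]; simp [h]

lemma sMatrix_eq_neg_one (i j : V) (h : D.DistTwo i j) : D.sMatrix i j = -1 := by
  rw [D.sMatrix_apply]; simp [h.2.1, h]

lemma sMatrix_eq_zero (i j : V) (h1 : ¬ D.Adj i j) (h2 : ¬ D.DistTwo i j) :
    D.sMatrix i j = 0 := by
  rw [D.sMatrix_apply]; simp [h1, h2]

lemma adj_of_sMatrix_eq_one {i j : V} (h : D.sMatrix i j = 1) : D.Adj i j := by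
  rw [D.sMatrix_apply] at h
  by_contra hc
  simp only [hc, if_false] at h
  split at h <;> norm_num at h

lemma distTwo_of_sMatrix_eq_neg_one {i j : V} (h : D.sMatrix i j = -1) : D.DistTwo i j := by
  rw [D.sMatrix_apply] at h
  split at h
  · norm_num at h
  · split at h
    · assumption
    · norm_num at h

lemma sMatrix_neg_one_le (i j : V) : -1 ≤ D.sMatrix i j := by
  rw [D.sMatrix_apply]; split_ifs <;> norm_num

lemma sMatrix_le_one (i j : V) : D.sMatrix i j ≤ 1 := by
  rw [D.sMatrix_apply]; split_ifs <;> norm_num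

lemma sMatrix_diag (i : V) : D.sMatrix i i = 0 :=
  D.sMatrix_eq_zero i i (D.loopless i) (fun h => h.1 rfl)

lemma not_distTwo_of_adj {i j : V} (h : D.Adj i j) : ¬ D.DistTwo i j :=
  fun hd => hd.2.1 h

end SimpleDigraph
namespace SimpleDigraph

variable {n : ℕ} (D : SimpleDigraph (Fin n))

open Classical Finset

/-- out-neighborhood as a Finset -/
noncomputable def outs (i : Fin n) : Finset (Fin n) := univ.filter (fun j => D.Adj i j)

/-- second out-neighborhood as a Finset -/
noncomputable def outs2 (i : Fin n) : Finset (Fin n) := univ.filter (fun j => D.DistTwo i j)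

lemma mem_outs {i j : Fin n} : j ∈ D.outs i ↔ D.Adj i j := by simp [outs]

lemma mem_outs2 {i j : Fin n} : j ∈ D.outs2 i ↔ D.DistTwo i j := by simp [outs2]

lemma mulVec_one (i : Fin n) :
    (D.sMatrix *ᵥ fun _ => (1 : ℝ)) i = ∑ j, D.sMatrix i j := by
  simp [Matrix.mulVec, dotProduct]

lemma rowsum_eq (i : Fin n) :
    ∑ j, D.sMatrix i j = ((D.outs i).card : ℝ) - ((D.outs2 i).card : ℝ) := by
  have h : ∀ j, D.sMatrix i j =
      (if D.Adj i j then (1:ℝ) else 0) - (if D.DistTwo i j then (1:ℝ) else 0) := by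
    intro j
    rw [D.sMatrix_apply]
    split_ifs with h1 h2
    · exact absurd h1 h2.2.1
    · norm_num
    · norm_num
    · norm_num
  simp only [h, Finset.sum_sub_distrib, Finset.sum_boole]
  simp [outs, outs2]

lemma card_outs2_lt_card_outs (hD : ∀ i, 0 < (D.sMatrix *ᵥ fun _ => (1 : ℝ)) i)
    (i : Fin n) : (D.outs2 i).card < (D.outs i).card := by
  have := hD i
  rw [D.mulVec_one, D.rowsum_eq] at this
  exact_mod_cast sub_pos.mp this

lemma one_le_rowsum (hD : ∀ i, 0 < (D.sMatrix *ᵥ fun _ => (1 : ℝ)) i) (i : Fin n) :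
    (1 : ℝ) ≤ ∑ j, D.sMatrix i j := by
  rw [D.rowsum_eq]
  have h := D.card_outs2_lt_card_outs hD i
  have : ((D.outs2 i).card : ℝ) + 1 ≤ (D.outs i).card := by exact_mod_cast h
  linarith

/-- every vertex of a C2-counterexample has out-degree at least 2 -/
lemma two_le_outdeg (hD : ∀ i, 0 < (D.sMatrix *ᵥ fun _ => (1 : ℝ)) i) (v : Fin n) :
    2 ≤ (D.outs v).card := by
  have hv := D.card_outs2_lt_card_outs hD v
  have h1 : 1 ≤ (D.outs v).card := by omega
  obtain ⟨u, hu⟩ := Finset.card_pos.mp (show 0 < (D.outs v).card by omega)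
  rw [D.mem_outs] at hu
  by_contra hc
  have hcard : (D.outs v).card = 1 := by omega
  have houts : D.outs v = {u} := by
    obtain ⟨a, ha⟩ := Finset.card_eq_one.mp hcard
    have hu' : u ∈ D.outs v := D.mem_outs.mpr hu
    rw [ha] at hu' ⊢
    simp only [Finset.mem_singleton] at hu'
    rw [hu']
  -- u has an out-neighbor x
  have hu2 := D.card_outs2_lt_card_outs hD u
  obtain ⟨x, hx⟩ := Finset.card_pos.mp (show 0 < (D.outs u).card by omega)
  rw [D.mem_outs] at hx
  have hxv : x ≠ v := fun h => D.no_opposite v u hu (h ▸ hx)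
  have hxu : x ≠ u := fun h => D.loopless u (h ▸ hx)
  have hnadj : ¬ D.Adj v x := by
    intro h
    have : x ∈ D.outs v := D.mem_outs.mpr h
    rw [houts] at this; simp at this; exact hxu this
  have : D.DistTwo v x := ⟨fun h => hxv h.symm, hnadj, u, hu, hx⟩
  have : x ∈ D.outs2 v := D.mem_outs2.mpr this
  have : 1 ≤ (D.outs2 v).card := Finset.card_pos.mpr ⟨x, this⟩
  omega

end SimpleDigraph
namespace SimpleDigraph

open Finset

variable {V : Type}

/-- the opposite (reverse) digraph -/
def op (D : SimpleDigraph V) : SimpleDigraph V where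
  Adj u v := D.Adj v u
  loopless v := D.loopless v
  no_opposite u v h h' := D.no_opposite v u h h'

lemma op_distTwo (D : SimpleDigraph V) (u v : V) :
    (D.op).DistTwo u v ↔ D.DistTwo v u := by
  constructor
  · rintro ⟨hne, hnadj, w, h1, h2⟩
    exact ⟨hne.symm, hnadj, w, h2, h1⟩
  · rintro ⟨hne, hnadj, w, h1, h2⟩
    exact ⟨hne.symm, hnadj, w, h2, h1⟩

lemma op_sMatrix (D : SimpleDigraph V) : (D.op).sMatrix = (D.sMatrix)ᵀ := by
  funext i j
  rw [(D.op).sMatrix_apply, Matrix.transpose_apply, D.sMatrix_apply]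
  have h1 : (D.op).Adj i j ↔ D.Adj j i := Iff.rfl
  by_cases ha : D.Adj j i
  · simp [ha, h1.mpr ha]
  · have hna : ¬ (D.op).Adj i j := fun h => ha (h1.mp h)
    by_cases hd : D.DistTwo j i
    · simp [ha, hna, hd, (D.op_distTwo i j).mpr hd]
    · have : ¬ (D.op).DistTwo i j := fun h => hd ((D.op_distTwo i j).mp h)
      simp [ha, hna, hd, this]

lemma op_numArcs (D : SimpleDigraph V) : (D.op).numArcs = D.numArcs := by
  apply Nat.card_congr
  exact ⟨fun p => ⟨(p.1.2, p.1.1), p.2⟩, fun p => ⟨(p.1.2, p.1.1), p.2⟩,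
    fun p => by cases p; simp, fun p => by cases p; simp⟩

/-- delete a single arc -/
def delArc (D : SimpleDigraph V) (a b : V) : SimpleDigraph V where
  Adj u v := D.Adj u v ∧ ¬(u = a ∧ v = b)
  loopless v h := D.loopless v h.1
  no_opposite u v h h' := D.no_opposite u v h.1 h'.1

/-- generic arc-counting comparison -/
lemma numArcs_lt_numArcs {k l : ℕ} (A : SimpleDigraph (Fin k)) (B : SimpleDigraph (Fin l))
    (f : {p : Fin k × Fin k // A.Adj p.1 p.2} → {p : Fin l × Fin l // B.Adj p.1 p.2})
    (hf : Function.Injective f)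
    (q : {p : Fin l × Fin l // B.Adj p.1 p.2}) (hq : q ∉ Set.range f) :
    A.numArcs < B.numArcs := by
  classical
  have : ∀ (T : Type) [Finite T], Nat.card T = Nat.card T := fun _ _ => rfl
  haveI : Fintype {p : Fin k × Fin k // A.Adj p.1 p.2} := Fintype.ofFinite _
  haveI : Fintype {p : Fin l × Fin l // B.Adj p.1 p.2} := Fintype.ofFinite _
  rw [numArcs, numArcs, Nat.card_eq_fintype_card, Nat.card_eq_fintype_card]
  exact Fintype.card_lt_of_injective_of_notMem f hf hq

lemma delArc_numArcs_lt {k : ℕ} (D : SimpleDigraph (Fin k)) {a b : Fin k}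
    (hab : D.Adj a b) : (D.delArc a b).numArcs < D.numArcs := by
  apply numArcs_lt_numArcs (D.delArc a b) D (fun p => ⟨p.1, p.2.1⟩)
    (fun p q h => by cases p; cases q; simpa using h) ⟨(a, b), hab⟩
  rintro ⟨⟨p, hp⟩, h⟩
  apply hp.2
  have : p = (a, b) := congrArg Subtype.val h
  exact ⟨congrArg Prod.fst this, congrArg Prod.snd this⟩

/-- the induced subdigraph on a finite set `W`, as a digraph on `Fin W.card` -/
noncomputable def restrict {k : ℕ} (D : SimpleDigraph (Fin k)) (W : Finset (Fin k)) :
    SimpleDigraph (Fin W.card) where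
  Adj i j := D.Adj (W.equivFin.symm i) (W.equivFin.symm j)
  loopless v := D.loopless _
  no_opposite u v h h' := D.no_opposite _ _ h h'

lemma restrict_numArcs_lt {k : ℕ} (D : SimpleDigraph (Fin k)) (W : Finset (Fin k))
    {x y : Fin k} (hxy : D.Adj x y) (hx : x ∉ W ∨ y ∉ W) :
    (D.restrict W).numArcs < D.numArcs := by
  apply numArcs_lt_numArcs (D.restrict W) D
    (fun p => ⟨((W.equivFin.symm p.1.1 : Fin k), (W.equivFin.symm p.1.2 : Fin k)), p.2⟩)
    ?_ ⟨(x, y), hxy⟩ ?_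
  · rintro ⟨⟨p1, p2⟩, hp⟩ ⟨⟨q1, q2⟩, hq⟩ h
    have h' := congrArg Subtype.val h
    simp only [Prod.mk.injEq] at h'
    have e1 : (W.equivFin.symm p1 : W) = (W.equivFin.symm q1 : W) := Subtype.ext h'.1
    have e2 : (W.equivFin.symm p2 : W) = (W.equivFin.symm q2 : W) := Subtype.ext h'.2
    have := W.equivFin.symm.injective e1
    have := W.equivFin.symm.injective e2
    simp_all
  · rintro ⟨⟨p, hp⟩, h⟩
    have : ((W.equivFin.symm p.1 : Fin k), (W.equivFin.symm p.2 : Fin k)) = (x, y) :=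
      congrArg Subtype.val h
    have h1 : (W.equivFin.symm p.1 : Fin k) = x := congrArg Prod.fst this
    have h2 : (W.equivFin.symm p.2 : Fin k) = y := congrArg Prod.snd this
    rcases hx with hx | hy
    · exact hx (h1 ▸ (W.equivFin.symm p.1).2)
    · exact hy (h2 ▸ (W.equivFin.symm p.2).2)

end SimpleDigraph
namespace SimpleDigraph

open Finset

variable {k : ℕ}

/-- the image in `Fin k` of an index of `restrict D W` -/
noncomputable def rIdx (W : Finset (Fin k)) (i : Fin W.card) : Fin k :=
  (W.equivFin.symm i : W)

lemma rIdx_mem (W : Finset (Fin k)) (i : Fin W.card) : rIdx W i ∈ W :=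
  (W.equivFin.symm i).2

lemma rIdx_injective (W : Finset (Fin k)) : Function.Injective (rIdx W) := by
  intro i j h
  exact W.equivFin.symm.injective (Subtype.ext h)

lemma rIdx_surjOn (W : Finset (Fin k)) {y : Fin k} (hy : y ∈ W) :
    ∃ j, rIdx W j = y := ⟨W.equivFin ⟨y, hy⟩, by simp [rIdx]⟩

lemma restrict_adj (D : SimpleDigraph (Fin k)) (W : Finset (Fin k)) (i j : Fin W.card) :
    (D.restrict W).Adj i j ↔ D.Adj (rIdx W i) (rIdx W j) := Iff.rfl

lemma restrict_distTwo (D : SimpleDigraph (Fin k)) (W : Finset (Fin k))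
    (hmid : ∀ i ∈ W, ∀ j ∈ W, ∀ y, D.Adj i y → D.Adj y j → y ∈ W)
    (i j : Fin W.card) :
    (D.restrict W).DistTwo i j ↔ D.DistTwo (rIdx W i) (rIdx W j) := by
  constructor
  · rintro ⟨hne, hnadj, y, h1, h2⟩
    exact ⟨fun h => hne (rIdx_injective W h), hnadj, rIdx W y, h1, h2⟩
  · rintro ⟨hne, hnadj, y, h1, h2⟩
    have hy : y ∈ W := hmid _ (rIdx_mem W i) _ (rIdx_mem W j) y h1 h2
    obtain ⟨y', hy'⟩ := rIdx_surjOn W hy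
    refine ⟨fun h => hne (congrArg (rIdx W) h), hnadj, y', ?_, ?_⟩
    · rw [restrict_adj, hy']; exact h1
    · rw [restrict_adj, hy']; exact h2

lemma restrict_sMatrix (D : SimpleDigraph (Fin k)) (W : Finset (Fin k))
    (hmid : ∀ i ∈ W, ∀ j ∈ W, ∀ y, D.Adj i y → D.Adj y j → y ∈ W)
    (i j : Fin W.card) :
    (D.restrict W).sMatrix i j = D.sMatrix (rIdx W i) (rIdx W j) := by
  rw [(D.restrict W).sMatrix_apply, D.sMatrix_apply]
  by_cases ha : D.Adj (rIdx W i) (rIdx W j)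
  · simp [ha, (restrict_adj D W i j).mpr ha]
  · have hna : ¬ (D.restrict W).Adj i j := fun h => ha ((restrict_adj D W i j).mp h)
    by_cases hd : D.DistTwo (rIdx W i) (rIdx W j)
    · simp [ha, hna, hd, (restrict_distTwo D W hmid i j).mpr hd]
    · have : ¬ (D.restrict W).DistTwo i j := fun h => hd ((restrict_distTwo D W hmid i j).mp h)
      simp [ha, hna, hd, this]

lemma sMatrix_eq_zero_of_closed (D : SimpleDigraph (Fin k)) (W : Finset (Fin k))
    (hcl : ∀ i ∈ W, ∀ y, D.Adj i y → y ∈ W)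
    {i j : Fin k} (hi : i ∈ W) (hj : j ∉ W) : D.sMatrix i j = 0 := by
  apply D.sMatrix_eq_zero
  · intro h; exact hj (hcl i hi j h)
  · rintro ⟨-, -, y, h1, h2⟩
    exact hj (hcl y (hcl i hi y h1) j h2)

/-- reindexing a sum over the restricted vertex set -/
lemma sum_rIdx (W : Finset (Fin k)) (f : Fin k → ℝ) :
    ∑ j : Fin W.card, f (rIdx W j) = ∑ j ∈ W, f j := by
  rw [← Finset.sum_coe_sort W f]
  exact W.equivFin.symm.sum_comp (fun x : W => f x)

lemma restrict_mulVec_one (D : SimpleDigraph (Fin k)) (W : Finset (Fin k))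
    (hcl : ∀ i ∈ W, ∀ y, D.Adj i y → y ∈ W) (i : Fin W.card) :
    ((D.restrict W).sMatrix *ᵥ fun _ => (1:ℝ)) i = (D.sMatrix *ᵥ fun _ => (1:ℝ)) (rIdx W i) := by
  have hmid : ∀ i ∈ W, ∀ j ∈ W, ∀ y, D.Adj i y → D.Adj y j → y ∈ W :=
    fun i hi j _ y h1 _ => hcl i hi y h1
  rw [mulVec_one, mulVec_one]
  calc ∑ j, (D.restrict W).sMatrix i j
      = ∑ j : Fin W.card, D.sMatrix (rIdx W i) (rIdx W j) := by
        exact Finset.sum_congr rfl fun j _ => restrict_sMatrix D W hmid i j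
    _ = ∑ j ∈ W, D.sMatrix (rIdx W i) j := sum_rIdx W _
    _ = ∑ j, D.sMatrix (rIdx W i) j := by
        apply Finset.sum_subset (Finset.subset_univ W)
        intro j _ hj
        exact sMatrix_eq_zero_of_closed D W hcl (rIdx_mem W i) hj

lemma op_mulVec (D : SimpleDigraph (Fin k)) (w : Fin k → ℝ) (j : Fin k) :
    ((D.op).sMatrix *ᵥ w) j = ∑ i, D.sMatrix i j * w i := by
  rw [op_sMatrix]
  simp [Matrix.mulVec, dotProduct, Matrix.transpose_apply]

/-- the bilinear pairing argument: a digraph all of whose row sums are positive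
admits no weight vector for its opposite. -/
lemma bilinear {n : ℕ} (D : SimpleDigraph (Fin n))
    (hD : ∀ i, 0 < (D.sMatrix *ᵥ fun _ => (1:ℝ)) i)
    (w : Fin n → ℝ) (hw0 : ∀ i, 0 ≤ w i) (hwne : w ≠ 0)
    (hle : ∀ j, ∑ i, D.sMatrix i j * w i ≤ 0) : False := by
  have key : ∑ i, w i * (∑ j, D.sMatrix i j) ≤ 0 := by
    calc ∑ i, w i * (∑ j, D.sMatrix i j)
        = ∑ i, ∑ j, D.sMatrix i j * w i := by
          refine Finset.sum_congr rfl fun i _ => ?_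
          rw [Finset.mul_sum]
          exact Finset.sum_congr rfl fun j _ => mul_comm _ _
      _ = ∑ j, ∑ i, D.sMatrix i j * w i := Finset.sum_comm
      _ ≤ 0 := Finset.sum_nonpos fun j _ => hle j
  obtain ⟨i0, hi0⟩ := Function.ne_iff.mp hwne
  have hwi0 : 0 < w i0 := lt_of_le_of_ne (hw0 i0) (Ne.symm hi0)
  have hri0 : 0 < ∑ j, D.sMatrix i0 j := by rw [← mulVec_one]; exact hD i0
  have hterm : ∀ i ∈ Finset.univ, 0 ≤ w i * (∑ j, D.sMatrix i j) := by
    intro i _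
    have : 0 < ∑ j, D.sMatrix i j := by rw [← mulVec_one]; exact hD i
    exact mul_nonneg (hw0 i) this.le
  have := Finset.single_le_sum hterm (Finset.mem_univ i0)
  nlinarith [mul_pos hwi0 hri0]

end SimpleDigraph
namespace SimpleDigraph

open Finset

variable {n : ℕ}

lemma sMatrix_trichotomy (D : SimpleDigraph (Fin n)) (i j : Fin n) :
    D.sMatrix i j = 1 ∨ D.sMatrix i j = -1 ∨ D.sMatrix i j = 0 := by
  rw [D.sMatrix_apply]; split_ifs <;> simp

lemma delArc_adj (D : SimpleDigraph (Fin n)) (a b u v : Fin n) :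
    (D.delArc a b).Adj u v ↔ D.Adj u v ∧ ¬(u = a ∧ v = b) := Iff.rfl

lemma delArc_entry_ge (D : SimpleDigraph (Fin n)) (a b : Fin n) {i j : Fin n}
    (h : ¬(i = a ∧ j = b)) : D.sMatrix i j ≤ (D.delArc a b).sMatrix i j := by
  by_cases ha : D.Adj i j
  · have ha' : (D.delArc a b).Adj i j := ⟨ha, h⟩
    rw [D.sMatrix_eq_one _ _ ha, (D.delArc a b).sMatrix_eq_one _ _ ha']
  · by_cases hd : D.DistTwo i j
    · rw [D.sMatrix_eq_neg_one _ _ hd]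
      exact (D.delArc a b).sMatrix_neg_one_le i j
    · rw [D.sMatrix_eq_zero _ _ ha hd, (D.delArc a b).sMatrix_eq_zero]
      · intro h'; exact ha h'.1
      · rintro ⟨hne, -, y, h1, h2⟩
        exact hd ⟨hne, ha, y, h1.1, h2.1⟩

lemma delArc_rowsum_ge (D : SimpleDigraph (Fin n)) (a b : Fin n) {i : Fin n} (hi : i ≠ a) :
    ∑ j, D.sMatrix i j ≤ ∑ j, (D.delArc a b).sMatrix i j :=
  Finset.sum_le_sum fun j _ => D.delArc_entry_ge a b (fun h => hi h.1)

lemma delArc_rowsum_a (D : SimpleDigraph (Fin n)) (a b : Fin n) :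
    ∑ j, D.sMatrix a j - 2 ≤ ∑ j, (D.delArc a b).sMatrix a j := by
  rw [← Finset.sum_erase_add Finset.univ _ (Finset.mem_univ b),
      ← Finset.sum_erase_add Finset.univ (fun j => (D.delArc a b).sMatrix a j) (Finset.mem_univ b)]
  have h1 : ∑ j ∈ Finset.univ.erase b, D.sMatrix a j
      ≤ ∑ j ∈ Finset.univ.erase b, (D.delArc a b).sMatrix a j := by
    refine Finset.sum_le_sum fun j hj => D.delArc_entry_ge a b fun h => ?_
    exact (Finset.mem_erase.mp hj).1 h.2
  have h2 : D.sMatrix a b - 2 ≤ (D.delArc a b).sMatrix a b := by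
    have := (D.delArc a b).sMatrix_neg_one_le a b
    have := D.sMatrix_le_one a b
    linarith
  linarith

end SimpleDigraph
namespace SimpleDigraph

open Finset

lemma key {n : ℕ} (D : SimpleDigraph (Fin n))
    (hD : ∀ i, 0 < (D.sMatrix *ᵥ fun _ => (1:ℝ)) i)
    (oracle : ∀ F : SimpleDigraph (Fin n), F.numArcs < D.numArcs →
      ∃ w : Fin n → ℝ, (∀ i, 0 ≤ w i) ∧ w ≠ 0 ∧ F.sMatrix *ᵥ w ≤ 0)
    (a : Fin n) (hmax : ∀ v, (D.outs v).card ≤ (D.outs a).card)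
    {b : Fin n} (hb : b ∈ D.outs a) :
    ∃ i, i ≠ a ∧ D.outs i = insert b (D.outs2 a) ∧ D.outs2 i = (D.outs a).erase b ∧
      (D.outs a).card = (D.outs2 a).card + 1 := by
  classical
  have hadj_ab : D.Adj a b := D.mem_outs.mp hb
  set D' := D.delArc a b with hD'def
  have harcs : (D'.op).numArcs < D.numArcs := by
    rw [op_numArcs]; exact D.delArc_numArcs_lt hadj_ab
  obtain ⟨w, hw0, hwne, hwle⟩ := oracle D'.op harcs
  have hcol : ∀ j, ∑ i, D'.sMatrix i j * w i ≤ 0 := by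
    intro j; have := hwle j; rwa [op_mulVec] at this
  have hr1 : ∀ i : Fin n, i ≠ a → (1:ℝ) ≤ ∑ j, D'.sMatrix i j :=
    fun i hi => le_trans (D.one_le_rowsum hD i) (D.delArc_rowsum_ge a b hi)
  have hra : (-1:ℝ) ≤ ∑ j, D'.sMatrix a j := by
    have h1 := D.delArc_rowsum_a a b
    have h2 := D.one_le_rowsum hD a
    linarith
  set T := ∑ i ∈ Finset.univ.erase a, w i with hTdef
  have hT0 : 0 ≤ T := Finset.sum_nonneg fun i _ => hw0 i
  -- column inequalities
  have hSac : ∀ c ∈ (D.outs a).erase b, D'.sMatrix a c = 1 := by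
    intro c hc
    obtain ⟨hcb, hc'⟩ := Finset.mem_erase.mp hc
    exact D'.sMatrix_eq_one a c ⟨D.mem_outs.mp hc', fun h => hcb h.2⟩
  have hA : ∀ c ∈ (D.outs a).erase b,
      w a + ∑ i ∈ Finset.univ.erase a, D'.sMatrix i c * w i ≤ 0 := by
    intro c hc
    have h := hcol c
    rw [← Finset.sum_erase_add Finset.univ _ (Finset.mem_univ a), hSac c hc, one_mul] at h
    linarith
  have hA2 : ∀ c : Fin n, -T ≤ ∑ i ∈ Finset.univ.erase a, D'.sMatrix i c * w i := by
    intro c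
    have : ∀ i ∈ Finset.univ.erase a, -(w i) ≤ D'.sMatrix i c * w i := by
      intro i _
      have := mul_le_mul_of_nonneg_right (D'.sMatrix_neg_one_le i c) (hw0 i)
      linarith
    have hsum := Finset.sum_le_sum this
    rw [Finset.sum_neg_distrib] at hsum
    linarith [hsum]
  -- total inequality
  have htot : (∑ j, D'.sMatrix a j) * w a
      + ∑ i ∈ Finset.univ.erase a, (∑ j, D'.sMatrix i j) * w i ≤ 0 := by
    have h1 : ∑ j, ∑ i, D'.sMatrix i j * w i ≤ 0 :=
      Finset.sum_nonpos fun j _ => hcol j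
    have h2 : ∑ j, ∑ i, D'.sMatrix i j * w i = ∑ i, (∑ j, D'.sMatrix i j) * w i := by
      rw [Finset.sum_comm]
      exact Finset.sum_congr rfl fun i _ => (Finset.sum_mul _ _ _).symm
    rw [h2, ← Finset.sum_erase_add Finset.univ _ (Finset.mem_univ a)] at h1
    linarith
  have hB : T ≤ ∑ i ∈ Finset.univ.erase a, (∑ j, D'.sMatrix i j) * w i := by
    refine Finset.sum_le_sum fun i hi => ?_
    have hine := (Finset.mem_erase.mp hi).1
    have := mul_le_mul_of_nonneg_right (hr1 i hine) (hw0 i)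
    linarith
  have hC : -(w a) ≤ (∑ j, D'.sMatrix a j) * w a := by
    have := mul_le_mul_of_nonneg_right hra (hw0 a)
    linarith
  -- T = w a and positivity
  obtain ⟨c0, hc0⟩ : ∃ c, c ∈ (D.outs a).erase b := by
    have h2 := D.two_le_outdeg hD a
    have : 1 ≤ ((D.outs a).erase b).card := by
      rw [Finset.card_erase_of_mem hb]; omega
    exact Finset.card_pos.mp (by omega)
  have hwaT : w a ≤ T := le_trans (by linarith [hA c0 hc0]) (by linarith [hA2 c0] : -(∑ i ∈ Finset.univ.erase a, D'.sMatrix i c0 * w i) ≤ T)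
  have hTwa : T = w a := by linarith
  have hwa_pos : 0 < w a := by
    rcases lt_or_eq_of_le (hw0 a) with h | h
    · exact h
    · exfalso
      apply hwne
      funext i
      by_cases hia : i = a
      · rw [hia]; exact h.symm
      · have hz : ∑ i ∈ Finset.univ.erase a, w i = 0 := by rw [← hTdef, hTwa, ← h]
        have := (Finset.sum_eq_zero_iff_of_nonneg (fun i _ => hw0 i)).mp hz i
          (Finset.mem_erase.mpr ⟨hia, Finset.mem_univ i⟩)
        exact this
  -- forced equalities
  have hra_eq : ∑ j, D'.sMatrix a j = -1 := by
    have h1 : T ≤ -((∑ j, D'.sMatrix a j) * w a) := by linarith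
    have h2 : -((∑ j, D'.sMatrix a j) * w a) ≤ w a := by linarith
    have h3 : (∑ j, D'.sMatrix a j) * w a = -(w a) := by linarith
    have := mul_right_cancel₀ (ne_of_gt hwa_pos) (h3.trans (by ring : -(w a) = (-1) * w a))
    exact this
  have hErows : ∀ i ∈ Finset.univ.erase a, ((∑ j, D'.sMatrix i j) - 1) * w i = 0 := by
    have hsum_eq : ∑ i ∈ Finset.univ.erase a, (∑ j, D'.sMatrix i j) * w i = T := by
      have : (∑ j, D'.sMatrix a j) * w a = -(w a) := by
        rw [hra_eq]; ring
      have h1 : ∑ i ∈ Finset.univ.erase a, (∑ j, D'.sMatrix i j) * w i ≤ w a := by linarith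
      linarith [hB, hTwa]
    have : ∑ i ∈ Finset.univ.erase a, ((∑ j, D'.sMatrix i j) - 1) * w i = 0 := by
      have expand : ∑ i ∈ Finset.univ.erase a, ((∑ j, D'.sMatrix i j) - 1) * w i
          = ∑ i ∈ Finset.univ.erase a, ((∑ j, D'.sMatrix i j) * w i - w i) := by
        exact Finset.sum_congr rfl fun i _ => by ring
      rw [expand, Finset.sum_sub_distrib, hsum_eq]
      simp [hTdef]
    refine fun i hi => (Finset.sum_eq_zero_iff_of_nonneg ?_).mp this i hi
    intro i hi
    have hine := (Finset.mem_erase.mp hi).1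
    have h1 := hr1 i hine
    have := hw0 i
    nlinarith
  have hEcol : ∀ c ∈ (D.outs a).erase b, ∀ i ∈ Finset.univ.erase a,
      (D'.sMatrix i c + 1) * w i = 0 := by
    intro c hc
    have hsum_eq : ∑ i ∈ Finset.univ.erase a, D'.sMatrix i c * w i = -T := by
      have h1 := hA c hc
      have h2 := hA2 c
      linarith [hTwa]
    have hz : ∑ i ∈ Finset.univ.erase a, (D'.sMatrix i c + 1) * w i = 0 := by
      have expand : ∑ i ∈ Finset.univ.erase a, (D'.sMatrix i c + 1) * w i
          = ∑ i ∈ Finset.univ.erase a, (D'.sMatrix i c * w i + w i) :=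
        Finset.sum_congr rfl fun i _ => by ring
      rw [expand, Finset.sum_add_distrib, hsum_eq]
      simp [hTdef]
    refine fun i hi => (Finset.sum_eq_zero_iff_of_nonneg ?_).mp hz i hi
    intro i _
    have h1 := D'.sMatrix_neg_one_le i c
    have := hw0 i
    nlinarith
  -- row a structure
  have hSab : D.sMatrix a b = 1 := D.sMatrix_eq_one a b hadj_ab
  have hrowa : D'.sMatrix a b = -1 ∧ (∑ j, D.sMatrix a j) = 1 ∧
      ∀ j, j ≠ b → D'.sMatrix a j = D.sMatrix a j := by
    have hterm : ∀ j ∈ Finset.univ.erase b, 0 ≤ D'.sMatrix a j - D.sMatrix a j := by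
      intro j hj
      have := D.delArc_entry_ge a b (i := a) (j := j) (fun h => (Finset.mem_erase.mp hj).1 h.2)
      linarith
    have hs : ∑ j ∈ Finset.univ.erase b, (D'.sMatrix a j - D.sMatrix a j)
        = (-1 - D'.sMatrix a b) - ((∑ j, D.sMatrix a j) - 1) := by
      rw [Finset.sum_sub_distrib]
      rw [← Finset.sum_erase_add Finset.univ (fun j => D'.sMatrix a j) (Finset.mem_univ b)] at hra_eq
      have h2 : ∑ j ∈ Finset.univ.erase b, D.sMatrix a j = (∑ j, D.sMatrix a j) - D.sMatrix a b := by
        rw [← Finset.sum_erase_add Finset.univ (fun j => D.sMatrix a j) (Finset.mem_univ b)]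
        ring
      rw [h2, hSab]
      linarith
    have hs0 : 0 ≤ ∑ j ∈ Finset.univ.erase b, (D'.sMatrix a j - D.sMatrix a j) :=
      Finset.sum_nonneg hterm
    have hb1 : -1 ≤ D'.sMatrix a b := D'.sMatrix_neg_one_le a b
    have hra1 : 1 ≤ ∑ j, D.sMatrix a j := D.one_le_rowsum hD a
    have hSab' : D'.sMatrix a b = -1 := by linarith [hs0, hs.symm ▸ hs0]
    have hra' : (∑ j, D.sMatrix a j) = 1 := by
      rw [hs, hSab'] at hs0; linarith
    refine ⟨hSab', hra', ?_⟩
    have hz : ∑ j ∈ Finset.univ.erase b, (D'.sMatrix a j - D.sMatrix a j) = 0 := by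
      rw [hs, hSab', hra']; ring
    intro j hjb
    have := (Finset.sum_eq_zero_iff_of_nonneg hterm).mp hz j
      (Finset.mem_erase.mpr ⟨hjb, Finset.mem_univ j⟩)
    linarith
  obtain ⟨hS'ab, hra1, haj⟩ := hrowa
  -- cardinality of row a
  have hracard : (D.outs a).card = (D.outs2 a).card + 1 := by
    have := D.rowsum_eq a
    rw [hra1] at this
    have h := this.symm
    have : ((D.outs a).card : ℝ) = ((D.outs2 a).card : ℝ) + 1 := by linarith
    exact_mod_cast this
  -- find a supported vertex
  obtain ⟨i0, hi0mem, hwi0⟩ : ∃ i0 ∈ Finset.univ.erase a, 0 < w i0 := by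
    by_contra hcon
    push_neg at hcon
    have : T = 0 := by
      apply Finset.sum_eq_zero
      intro i hi
      exact le_antisymm (hcon i hi) (hw0 i)
    linarith [hTwa, hwa_pos]
  have hi0ne : i0 ≠ a := (Finset.mem_erase.mp hi0mem).1
  -- supported-row analysis, for arbitrary supported i
  have hsupp : ∀ i, i ≠ a → 0 < w i →
      (∀ j, D'.sMatrix i j = D.sMatrix i j) ∧ D.outs2 i = (D.outs a).erase b ∧
        (D.outs i).card = (D.outs a).card := by
    intro i hine hwi
    have hmem : i ∈ Finset.univ.erase a := Finset.mem_erase.mpr ⟨hine, Finset.mem_univ i⟩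
    have hr'i : ∑ j, D'.sMatrix i j = 1 := by
      have := hErows i hmem
      rcases mul_eq_zero.mp this with h | h
      · linarith
      · exact absurd h (ne_of_gt hwi)
    have hri : ∑ j, D.sMatrix i j = 1 := by
      have h1 := D.one_le_rowsum hD i
      have h2 := D.delArc_rowsum_ge a b hine
      linarith
    have hroweq : ∀ j, D'.sMatrix i j = D.sMatrix i j := by
      have hterm : ∀ j ∈ Finset.univ, 0 ≤ D'.sMatrix i j - D.sMatrix i j := by
        intro j _
        have := D.delArc_entry_ge a b (i := i) (j := j) (fun h => hine h.1)
        linarith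
      have hz : ∑ j, (D'.sMatrix i j - D.sMatrix i j) = 0 := by
        rw [Finset.sum_sub_distrib, hr'i, hri]; ring
      intro j
      have := (Finset.sum_eq_zero_iff_of_nonneg hterm).mp hz j (Finset.mem_univ j)
      linarith
    have hicard : (D.outs i).card = (D.outs2 i).card + 1 := by
      have := D.rowsum_eq i
      rw [hri] at this
      have : ((D.outs i).card : ℝ) = ((D.outs2 i).card : ℝ) + 1 := by linarith
      exact_mod_cast this
    have hsub : (D.outs a).erase b ⊆ D.outs2 i := by
      intro c hc
      have := hEcol c hc i hmem
      rcases mul_eq_zero.mp this with h | h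
      · have hSic : D.sMatrix i c = -1 := by rw [← hroweq c]; linarith
        exact D.mem_outs2.mpr (D.distTwo_of_sMatrix_eq_neg_one hSic)
      · exact absurd h (ne_of_gt hwi)
    have hcardle : (D.outs2 i).card ≤ ((D.outs a).erase b).card := by
      rw [Finset.card_erase_of_mem hb]
      have := hmax i
      omega
    have houts2 : D.outs2 i = (D.outs a).erase b :=
      (Finset.eq_of_subset_of_card_le hsub hcardle).symm
    have houtscard : (D.outs i).card = (D.outs a).card := by
      have h1 : (D.outs2 i).card = (D.outs a).card - 1 := by
        rw [houts2, Finset.card_erase_of_mem hb]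
      have h2 := D.two_le_outdeg hD a
      omega
    exact ⟨hroweq, houts2, houtscard⟩
  obtain ⟨hroweq0, houts2_0, houtscard0⟩ := hsupp i0 hi0ne hwi0
  -- column-zero transfer
  have hD9 : ∀ j, D'.sMatrix a j = 0 → D'.sMatrix i0 j = 0 := by
    intro j hSaj
    have h := hcol j
    rw [← Finset.sum_erase_add Finset.univ _ (Finset.mem_univ a), hSaj, zero_mul, add_zero] at h
    have hterm : ∀ i ∈ Finset.univ.erase a, 0 ≤ D'.sMatrix i j * w i := by
      intro i hi
      have hine := (Finset.mem_erase.mp hi).1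
      rcases lt_or_eq_of_le (hw0 i) with hwi | hwi
      · obtain ⟨hroweq, houts2, -⟩ := hsupp i hine hwi
        have hnn : 0 ≤ D.sMatrix i j := by
          rcases D.sMatrix_trichotomy i j with h1 | h1 | h1
          · rw [h1]; norm_num
          · exfalso
            have hjmem : j ∈ D.outs2 i := D.mem_outs2.mpr (D.distTwo_of_sMatrix_eq_neg_one h1)
            rw [houts2] at hjmem
            obtain ⟨hjb, hjouts⟩ := Finset.mem_erase.mp hjmem
            have : D'.sMatrix a j = D.sMatrix a j := haj j hjb
            rw [this, D.sMatrix_eq_one a j (D.mem_outs.mp hjouts)] at hSaj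
            norm_num at hSaj
          · rw [h1]
        rw [hroweq j]
        exact mul_nonneg hnn (hw0 i)
      · rw [← hwi, mul_zero]
    have hz := (Finset.sum_eq_zero_iff_of_nonneg hterm).mp (le_antisymm h (Finset.sum_nonneg hterm)) i0 hi0mem
    rcases mul_eq_zero.mp hz with h1 | h1
    · exact h1
    · exact absurd h1 (ne_of_gt hwi0)
  -- out-neighborhood of i0
  have hbn2 : b ∉ D.outs2 a := fun h => (D.mem_outs2.mp h).2.1 hadj_ab
  have houtsub : D.outs i0 ⊆ insert b (D.outs2 a) := by
    intro j hj
    have hadj : D.Adj i0 j := D.mem_outs.mp hj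
    have hS'ij : D'.sMatrix i0 j = 1 := by
      rw [hroweq0 j]
      exact D.sMatrix_eq_one i0 j hadj
    have hSaj_ne : D'.sMatrix a j ≠ 0 := by
      intro h
      rw [hD9 j h] at hS'ij
      norm_num at hS'ij
    rcases D'.sMatrix_trichotomy a j with h1 | h1 | h1
    · exfalso
      have hadj' : D'.Adj a j := D'.adj_of_sMatrix_eq_one h1
      have hjb : j ≠ b := fun h => hadj'.2 ⟨rfl, h⟩
      have hjmem : j ∈ (D.outs a).erase b :=
        Finset.mem_erase.mpr ⟨hjb, D.mem_outs.mpr hadj'.1⟩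
      rw [← houts2_0] at hjmem
      exact (D.not_distTwo_of_adj hadj) (D.mem_outs2.mp hjmem)
    · by_cases hjb : j = b
      · rw [hjb]; exact Finset.mem_insert_self b _
      · have : D.sMatrix a j = -1 := by rw [← haj j hjb]; exact h1
        exact Finset.mem_insert_of_mem
          (D.mem_outs2.mpr (D.distTwo_of_sMatrix_eq_neg_one this))
    · exact absurd h1 hSaj_ne
  have hinscard : (insert b (D.outs2 a)).card = (D.outs a).card := by
    rw [Finset.card_insert_of_notMem hbn2]
    omega
  have houts0 : D.outs i0 = insert b (D.outs2 a) := by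
    apply Finset.eq_of_subset_of_card_le houtsub
    rw [hinscard, ← houtscard0]
  exact ⟨i0, hi0ne, houts0, houts2_0, hracard⟩

end SimpleDigraph
namespace SimpleDigraph

open Finset

lemma mulVec_expand {n : ℕ} (M : Matrix (Fin n) (Fin n) ℝ) (w : Fin n → ℝ) (j : Fin n) :
    (M *ᵥ w) j = ∑ i, M j i * w i := by
  simp [Matrix.mulVec, dotProduct]

/-- main lemma: given a C2-counterexample `D` that is minimal, and an oracle producing
C4 witnesses for all strictly smaller digraphs, we get a contradiction. -/
lemma main_contradiction {n : ℕ} (hn : 0 < n) (D : SimpleDigraph (Fin n))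
    (hD : ∀ i, 0 < (D.sMatrix *ᵥ fun _ => (1 : ℝ)) i)
    (hDmin : ∀ (k : ℕ), 0 < k → ∀ D' : SimpleDigraph (Fin k),
      D'.numArcs < D.numArcs → ∃ i, (D'.sMatrix *ᵥ fun _ => (1 : ℝ)) i ≤ 0)
    (oracle : ∀ (k : ℕ), 0 < k → ∀ F : SimpleDigraph (Fin k),
      F.numArcs < D.numArcs →
      ∃ w : Fin k → ℝ, (∀ i, 0 ≤ w i) ∧ w ≠ 0 ∧ F.sMatrix *ᵥ w ≤ 0) : False := by
  classical
  -- choose a vertex of maximal out-degree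
  obtain ⟨a, -, hmax⟩ := Finset.exists_max_image Finset.univ (fun v => (D.outs v).card)
    ⟨⟨0, hn⟩, Finset.mem_univ _⟩
  have hmax' : ∀ v, (D.outs v).card ≤ (D.outs a).card := fun v => hmax v (Finset.mem_univ v)
  have hb2 : 2 ≤ (D.outs a).card := D.two_le_outdeg hD a
  obtain ⟨b1, hb1, b2, hb2', hb12⟩ := Finset.one_lt_card.mp (by omega : 1 < (D.outs a).card)
  obtain ⟨i1, hi1ne, hi1outs, hi1outs2, hracard⟩ :=
    D.key hD (oracle n hn) a hmax' hb1
  obtain ⟨i2, hi2ne, hi2outs, hi2outs2, -⟩ :=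
    D.key hD (oracle n hn) a hmax' hb2'
  -- generic claim about the vertices produced by `key`
  have claim : ∀ (b i : Fin n), b ∈ D.outs a → D.outs i = insert b (D.outs2 a) →
      D.outs2 i = (D.outs a).erase b →
      ∀ v ∈ D.outs2 a, ∀ x, D.Adj v x → x ∉ D.outs a → x ∉ D.outs2 a → x = i := by
    intro b i hbmem ho ho2 v hv x hadj hx1 hx2
    have hadj_iv : D.Adj i v := by
      have : v ∈ D.outs i := by rw [ho]; exact Finset.mem_insert_of_mem hv
      exact D.mem_outs.mp this
    by_contra hxi
    by_cases hadj_ix : D.Adj i x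
    · have : x ∈ D.outs i := D.mem_outs.mpr hadj_ix
      rw [ho] at this
      rcases Finset.mem_insert.mp this with h | h
      · exact hx1 (h ▸ hbmem)
      · exact hx2 h
    · have hdt : D.DistTwo i x := ⟨fun h => hxi h.symm, hadj_ix, v, hadj_iv, hadj⟩
      have : x ∈ D.outs2 i := D.mem_outs2.mpr hdt
      rw [ho2] at this
      exact hx1 (Finset.mem_of_mem_erase this)
  have hi1i2 : i1 ≠ i2 := by
    intro h
    have hmem : b2 ∈ (D.outs a).erase b1 := Finset.mem_erase.mpr ⟨(Ne.symm hb12), hb2'⟩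
    rw [← hi1outs2, h, hi2outs2] at hmem
    exact (Finset.mem_erase.mp hmem).1 rfl
  -- closure of the second neighborhood
  have hout2cl : ∀ v ∈ D.outs2 a, ∀ x, D.Adj v x → x ∈ D.outs a ∨ x ∈ D.outs2 a := by
    intro v hv x hadj
    by_contra hcon
    push_neg at hcon
    have h1 := claim b1 i1 hb1 hi1outs hi1outs2 v hv x hadj hcon.1 hcon.2
    have h2 := claim b2 i2 hb2' hi2outs hi2outs2 v hv x hadj hcon.1 hcon.2
    exact hi1i2 (h1 ▸ h2)
  have houtcl : ∀ v ∈ D.outs a, ∀ x, D.Adj v x → x ∈ D.outs a ∨ x ∈ D.outs2 a := by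
    intro v hv x hadj
    by_cases hx1 : x ∈ D.outs a
    · exact Or.inl hx1
    · right
      have hxa : x ≠ a := by
        intro h
        exact D.no_opposite a v (D.mem_outs.mp hv) (h ▸ hadj)
      exact D.mem_outs2.mpr ⟨fun h => hxa h.symm, fun h => hx1 (D.mem_outs.mpr h), v,
        D.mem_outs.mp hv, hadj⟩
  -- the closed set W
  set W : Finset (Fin n) := insert a (D.outs a ∪ D.outs2 a) with hWdef
  have hWa : a ∈ W := Finset.mem_insert_self a _
  have hsubW : ∀ x, x ∈ D.outs a ∨ x ∈ D.outs2 a → x ∈ W := by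
    intro x hx
    exact Finset.mem_insert_of_mem (Finset.mem_union.mpr hx)
  have hcl : ∀ i ∈ W, ∀ y, D.Adj i y → y ∈ W := by
    intro i hi y hy
    rcases Finset.mem_insert.mp hi with h | h
    · subst h
      exact hsubW y (Or.inl (D.mem_outs.mpr hy))
    · rcases Finset.mem_union.mp h with h | h
      · exact hsubW y (houtcl i h y hy)
      · exact hsubW y (hout2cl i h y hy)
  -- no vertex of W has an arc to a
  have hnoin : ∀ v ∈ W, ¬ D.Adj v a := by
    intro v hv hadj
    rcases Finset.mem_insert.mp hv with h | h
    · exact D.loopless a (h ▸ hadj)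
    · rcases Finset.mem_union.mp h with h | h
      · exact D.no_opposite a v (D.mem_outs.mp h) hadj
      · rcases hout2cl v h a hadj with ha | ha
        · exact D.loopless a (D.mem_outs.mp ha)
        · exact (D.mem_outs2.mp ha).1 rfl
  -- a has an in-neighbor
  have hb1a : b1 ≠ a := by
    intro h
    have hx := D.mem_outs.mp hb1
    rw [h] at hx
    exact D.loopless a hx
  have hxin : ∃ x, D.Adj x a := by
    by_contra hcon
    push_neg at hcon
    -- sink-deletion argument in the opposite digraph
    set F := D.op with hFdef
    have hsinkF : ∀ j, ¬ F.Adj a j := fun j h => hcon j h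
    set W' : Finset (Fin n) := Finset.univ.erase a with hW'def
    have hmid' : ∀ i ∈ W', ∀ j ∈ W', ∀ y, F.Adj i y → F.Adj y j → y ∈ W' := by
      intro i _ j _ y h1 h2
      refine Finset.mem_erase.mpr ⟨?_, Finset.mem_univ y⟩
      intro hya
      exact hsinkF j (hya ▸ h2)
    have hb1W' : b1 ∈ W' := Finset.mem_erase.mpr ⟨hb1a, Finset.mem_univ b1⟩
    have hcard' : 0 < W'.card := Finset.card_pos.mpr ⟨b1, hb1W'⟩
    have hab1 : D.Adj a b1 := D.mem_outs.mp hb1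
    have hFb1a : F.Adj b1 a := hab1
    have haW' : a ∉ W' := fun h => (Finset.mem_erase.mp h).1 rfl
    have harcs' : (F.restrict W').numArcs < D.numArcs := by
      have := restrict_numArcs_lt F W' hFb1a (Or.inr haW')
      rwa [op_numArcs] at this
    obtain ⟨w', hw'0, hw'ne, hw'le⟩ := oracle W'.card hcard' (F.restrict W') harcs'
    -- extend w' to all of Fin n by 0 at a
    set w : Fin n → ℝ := fun i => if h : i ∈ W' then w' (W'.equivFin ⟨i, h⟩) else 0 with hwdef
    have hw_r : ∀ i' : Fin W'.card, w (rIdx W' i') = w' i' := by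
      intro i'
      have hmem : rIdx W' i' ∈ W' := rIdx_mem W' i'
      have : W'.equivFin ⟨rIdx W' i', hmem⟩ = i' := by
        have : (⟨rIdx W' i', hmem⟩ : {x // x ∈ W'}) = W'.equivFin.symm i' := Subtype.ext rfl
        rw [this, Equiv.apply_symm_apply]
      simp only [hwdef, dif_pos hmem, this]
    have hw0 : ∀ i, 0 ≤ w i := by
      intro i
      simp only [hwdef]
      split
      · apply hw'0
      · exact le_refl 0
    have hwa : w a = 0 := by simp only [hwdef, dif_neg haW']
    have hwne : w ≠ 0 := by
      intro h
      apply hw'ne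
      funext k
      have := congrFun h (rIdx W' k)
      rwa [hw_r k] at this
    -- S_F w ≤ 0
    have hdown : ∀ j, ∑ i, F.sMatrix j i * w i ≤ 0 := by
      intro j
      by_cases hja : j = a
      · have hrow0 : ∀ i, F.sMatrix j i = 0 := by
          intro i
          rw [hja]
          apply F.sMatrix_eq_zero
          · exact hsinkF i
          · rintro ⟨-, -, y, h1, -⟩
            exact hsinkF y h1
        simp [hrow0]
      · have hjW' : j ∈ W' := Finset.mem_erase.mpr ⟨hja, Finset.mem_univ j⟩
        obtain ⟨j', hj'⟩ := rIdx_surjOn W' hjW'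
        have hstep1 : ∑ i, F.sMatrix j i * w i = ∑ i ∈ W', F.sMatrix j i * w i := by
          symm
          apply Finset.sum_subset (Finset.subset_univ W')
          intro i _ hiW'
          have : i = a := by
            by_contra hia
            exact hiW' (Finset.mem_erase.mpr ⟨hia, Finset.mem_univ i⟩)
          rw [this, hwa, mul_zero]
        have hstep2 : ∑ i ∈ W', F.sMatrix j i * w i
            = ∑ i' : Fin W'.card, F.sMatrix j (rIdx W' i') * w (rIdx W' i') :=
          (sum_rIdx W' (fun i => F.sMatrix j i * w i)).symm
        have hstep3 : ∑ i' : Fin W'.card, F.sMatrix j (rIdx W' i') * w (rIdx W' i')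
            = ∑ i' : Fin W'.card, (F.restrict W').sMatrix j' i' * w' i' := by
          refine Finset.sum_congr rfl fun i' _ => ?_
          rw [hw_r i', restrict_sMatrix F W' hmid' j' i', hj']
        have := hw'le j'
        rw [mulVec_expand] at this
        rw [hstep1, hstep2, hstep3]
        exact this
    -- contradiction with the bilinear lemma
    apply D.bilinear hD w hw0 hwne
    intro j
    have := hdown j
    have heq : ∀ i, F.sMatrix j i = D.sMatrix i j := by
      intro i
      rw [hFdef, op_sMatrix, Matrix.transpose_apply]
    calc ∑ i, D.sMatrix i j * w i = ∑ i, F.sMatrix j i * w i := by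
          exact Finset.sum_congr rfl fun i _ => by rw [heq i]
      _ ≤ 0 := hdown j
  -- conclude: restrict to W gives a smaller C2-counterexample
  obtain ⟨x0, hx0⟩ := hxin
  have hx0W : x0 ∉ W := fun h => hnoin x0 h hx0
  have hcardW : 0 < W.card := Finset.card_pos.mpr ⟨a, hWa⟩
  have harcsW : (D.restrict W).numArcs < D.numArcs :=
    restrict_numArcs_lt D W hx0 (Or.inl hx0W)
  obtain ⟨i, hile⟩ := hDmin W.card hcardW (D.restrict W) harcsW
  have := restrict_mulVec_one D W hcl i
  have hpos := hD (rIdx W i)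
  rw [← this] at hpos
  linarith

end SimpleDigraph

/-- Every minimal counterexample to Conjecture C4 has strictly fewer arcs than
every minimal counterexample to Conjecture C2. -/
theorem minimal_C4_counterexample_smaller_than_minimal_C2_counterexample
    {n m : ℕ} (hn : 0 < n) (hm : 0 < m)
    (D : SimpleDigraph (Fin n)) (E : SimpleDigraph (Fin m))
    -- `D` is a counterexample to Conjecture C2: `S_D · 𝟏 > 𝟎`
    (hD : ∀ i, 0 < (D.sMatrix *ᵥ fun _ => (1 : ℝ)) i)
    -- and `D` is minimal: every digraph with fewer arcs satisfies `S_{D'} · 𝟏 ≯ 𝟎`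
    (hDmin : ∀ (k : ℕ), 0 < k → ∀ D' : SimpleDigraph (Fin k),
      D'.numArcs < D.numArcs → ∃ i, (D'.sMatrix *ᵥ fun _ => (1 : ℝ)) i ≤ 0)
    -- `E` is a counterexample to Conjecture C4: it admits no non-zero weight
    -- vector `w` with `S_E · w ≤ 𝟎`
    (hE : ¬ ∃ w : Fin m → ℝ, (∀ i, 0 ≤ w i) ∧ w ≠ 0 ∧ E.sMatrix *ᵥ w ≤ 0)
    -- and `E` is minimal: every digraph with fewer arcs admits such a vector
    (hEmin : ∀ (k : ℕ), 0 < k → ∀ E' : SimpleDigraph (Fin k),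
      E'.numArcs < E.numArcs →
      ∃ w : Fin k → ℝ, (∀ i, 0 ≤ w i) ∧ w ≠ 0 ∧ E'.sMatrix *ᵥ w ≤ 0) :
    E.numArcs < D.numArcs := by
  by_contra hcon
  push_neg at hcon
  exact SimpleDigraph.main_contradiction hn D hD hDmin
    (fun k hk F harcs => hEmin k hk F (lt_of_lt_of_le harcs hcon))
end

section
/- The following two statements are equivalent: (C2) every digraph D satisfies S_D·𝟏 ≯ 𝟎; (C3) for every digraph D and every weight vector w on D, S_D·w ≯ 𝟎. Equivalently: there exists a digraph D and a nonnegative real vector w with S_D·w > 𝟎 if and only if there exists a digraph D* with S_{D*}·𝟏 > 𝟎. -/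
open Matrix

lemma sMatrix_cases {V : Type} (D : SimpleDigraph V) (i j : V) :
    D.sMatrix i j = 1 ∨ D.sMatrix i j = -1 ∨ D.sMatrix i j = 0 := by
  simp only [SimpleDigraph.sMatrix, Matrix.of_apply]
  split_ifs <;> tauto

lemma mulVec_apply' {n : ℕ} (M : Matrix (Fin n) (Fin n) ℝ) (w : Fin n → ℝ) (i : Fin n) :
    (M *ᵥ w) i = ∑ j, M i j * w j := by
  simp [Matrix.mulVec, dotProduct]

/-- Scale a positive-weighted counterexample to natural weights. -/
lemma exists_nat_weights {n : ℕ} (D : SimpleDigraph (Fin n)) (w : Fin n → ℝ)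
    (h0 : ∀ i, 0 ≤ w i) (h : ∀ i, 0 < (D.sMatrix *ᵥ w) i) :
    ∃ m : Fin n → ℕ, ∀ i, 0 < (D.sMatrix *ᵥ fun j => (m j : ℝ)) i := by
  rcases Nat.eq_zero_or_pos n with hn | hn
  · subst hn; exact ⟨fun _ => 0, fun i => i.elim0⟩
  haveI : Nonempty (Fin n) := ⟨⟨0, hn⟩⟩
  set c : ℝ := Finset.univ.inf' (Finset.univ_nonempty) (fun i => (D.sMatrix *ᵥ w) i) with hc
  have hcpos : 0 < c := by
    rw [hc, Finset.lt_inf'_iff]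
    exact fun i _ => h i
  set K : ℕ := ⌈(n : ℝ) / c⌉₊ + 1 with hK
  have hKc : (n : ℝ) < K * c := by
    have h1 : (n : ℝ) / c < K := by
      calc (n:ℝ)/c ≤ ⌈(n : ℝ) / c⌉₊ := Nat.le_ceil _
      _ < K := by rw [hK]; push_cast; linarith
    calc (n : ℝ) = ((n:ℝ)/c) * c := by field_simp
    _ < K * c := by exact mul_lt_mul_of_pos_right h1 hcpos
  refine ⟨fun j => ⌈(K : ℝ) * w j⌉₊, fun i => ?_⟩
  rw [mulVec_apply']
  have hpt : ∀ j : Fin n, D.sMatrix i j * ((K:ℝ) * w j) - 1 ≤ D.sMatrix i j * (⌈(K : ℝ) * w j⌉₊ : ℝ) := by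
    intro j
    have h1 : (K:ℝ) * w j ≤ (⌈(K : ℝ) * w j⌉₊ : ℝ) := Nat.le_ceil _
    have h2 : ((⌈(K : ℝ) * w j⌉₊ : ℝ)) < (K:ℝ) * w j + 1 :=
      Nat.ceil_lt_add_one (mul_nonneg (by positivity) (h0 j))
    rcases sMatrix_cases D i j with he | he | he <;> rw [he] <;> linarith
  have hsum : ∑ j, (D.sMatrix i j * ((K:ℝ) * w j) - 1) ≤ ∑ j, D.sMatrix i j * (⌈(K : ℝ) * w j⌉₊ : ℝ) :=
    Finset.sum_le_sum fun j _ => hpt j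
  have hval : ∑ j, (D.sMatrix i j * ((K:ℝ) * w j) - 1) = (K:ℝ) * ((D.sMatrix *ᵥ w) i) - n := by
    rw [mulVec_apply', Finset.sum_sub_distrib, Finset.mul_sum]
    simp only [Finset.sum_const, Finset.card_univ, Fintype.card_fin, nsmul_eq_mul, mul_one]
    congr 1
    exact Finset.sum_congr rfl fun x _ => by ring
  have hle : c ≤ (D.sMatrix *ᵥ w) i := by
    rw [hc]; exact Finset.inf'_le _ (Finset.mem_univ i)
  have : (K:ℝ) * c ≤ (K:ℝ) * ((D.sMatrix *ᵥ w) i) := by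
    apply mul_le_mul_of_nonneg_left hle (by positivity)
  linarith

/-- Blow-up: from a natural-weighted counterexample, make an unweighted one. -/
lemma blowup {n : ℕ} (hn : 0 < n) (D : SimpleDigraph (Fin n)) (m : Fin n → ℕ)
    (h : ∀ i, 0 < (D.sMatrix *ᵥ fun j => (m j : ℝ)) i) :
    ∃ (N : ℕ) (_ : 0 < N) (D' : SimpleDigraph (Fin N)),
      ∀ a, 0 < (D'.sMatrix *ᵥ fun _ => (1 : ℝ)) a := by
  haveI : Nonempty ((i : Fin n) × Fin (m i)) := by
    by_contra hne
    have hz : ∀ j : Fin n, m j = 0 := by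
      intro j
      by_contra hj
      exact hne ⟨⟨j, ⟨0, Nat.pos_of_ne_zero hj⟩⟩⟩
    have := h ⟨0, hn⟩
    rw [mulVec_apply'] at this
    simp [hz] at this
  set N := Fintype.card ((i : Fin n) × Fin (m i)) with hN
  have hNpos : 0 < N := Fintype.card_pos
  set e : Fin N ≃ (i : Fin n) × Fin (m i) := (Fintype.equivFin _).symm with he
  refine ⟨N, hNpos, ⟨fun a b => D.Adj (e a).1 (e b).1,
      fun a => D.loopless _, fun a b hab => D.no_opposite _ _ hab⟩, fun a => ?_⟩
  set D' : SimpleDigraph (Fin N) := ⟨fun a b => D.Adj (e a).1 (e b).1,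
      fun a => D.loopless _, fun a b hab => D.no_opposite _ _ hab⟩ with hD'
  show 0 < (D'.sMatrix *ᵥ fun _ => (1:ℝ)) a
  have hpt : ∀ b : Fin N, D.sMatrix (e a).1 (e b).1 ≤ D'.sMatrix a b := by
    intro b
    simp only [SimpleDigraph.sMatrix, Matrix.of_apply]
    by_cases hAdj : D.Adj (e a).1 (e b).1
    · have hAdj' : D'.Adj a b := hAdj
      rw [if_pos hAdj, if_pos hAdj']
    · have hAdj' : ¬ D'.Adj a b := hAdj
      rw [if_neg hAdj, if_neg hAdj']
      by_cases hdt : D'.DistTwo a b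
      · obtain ⟨hne, hnadj, c, h1, h2⟩ := id hdt
        have hdt2 : D.DistTwo (e a).1 (e b).1 := by
          refine ⟨?_, hAdj, (e c).1, h1, h2⟩
          intro heq
          exact D.no_opposite _ _ h1 (heq ▸ h2)
        rw [if_pos hdt2, if_pos hdt]
      · rw [if_neg hdt]
        split_ifs <;> norm_num
  rw [mulVec_apply']
  simp only [mul_one]
  have hge : ∑ b, D.sMatrix (e a).1 (e b).1 ≤ ∑ b, D'.sMatrix a b :=
    Finset.sum_le_sum fun b _ => hpt b
  have hre : ∑ b, D.sMatrix (e a).1 (e b).1 = (D.sMatrix *ᵥ fun j => (m j : ℝ)) (e a).1 := by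
    rw [Equiv.sum_comp e (fun p => D.sMatrix (e a).1 p.1)]
    rw [← Finset.univ_sigma_univ, Finset.sum_sigma, mulVec_apply']
    simp [mul_comm]
  have := h (e a).1
  linarith [hge, hre ▸ this]


/-- Conjecture C2: every digraph `D` satisfies `S_D · 𝟏 ≯ 𝟎`, i.e. some component
of `S_D · 𝟏` is nonpositive. -/
def ConjC2 : Prop :=
  ∀ (n : ℕ), 0 < n → ∀ D : SimpleDigraph (Fin n),
    ∃ i : Fin n, (D.sMatrix *ᵥ fun _ => (1 : ℝ)) i ≤ 0

/-- Conjecture C3: for every digraph `D` and every weight vector `w` on `D`,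
`S_D · w ≯ 𝟎`. -/
def ConjC3 : Prop :=
  ∀ (n : ℕ), 0 < n → ∀ D : SimpleDigraph (Fin n), ∀ w : Fin n → ℝ,
    (∀ i, 0 ≤ w i) → ∃ i : Fin n, (D.sMatrix *ᵥ w) i ≤ 0

/-- Conjectures C2 and C3 are equivalent; equivalently, there exist a digraph `D`
and a nonnegative vector `w` with `S_D · w > 𝟎` if and only if there exists a
digraph `D*` with `S_{D*} · 𝟏 > 𝟎`. -/
theorem conjC2_iff_conjC3 :
    (ConjC2 ↔ ConjC3) ∧
    ((∃ (n : ℕ) (_ : 0 < n) (D : SimpleDigraph (Fin n)) (w : Fin n → ℝ),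
        (∀ i, 0 ≤ w i) ∧ ∀ i, 0 < (D.sMatrix *ᵥ w) i) ↔
      (∃ (n : ℕ) (_ : 0 < n) (D : SimpleDigraph (Fin n)),
        ∀ i, 0 < (D.sMatrix *ᵥ fun _ => (1 : ℝ)) i)) := by
  have key : (∃ (n : ℕ) (_ : 0 < n) (D : SimpleDigraph (Fin n)) (w : Fin n → ℝ),
      (∀ i, 0 ≤ w i) ∧ ∀ i, 0 < (D.sMatrix *ᵥ w) i) →
      (∃ (n : ℕ) (_ : 0 < n) (D : SimpleDigraph (Fin n)),
        ∀ i, 0 < (D.sMatrix *ᵥ fun _ => (1 : ℝ)) i) := by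
    rintro ⟨n, hn, D, w, hw0, hw⟩
    obtain ⟨m, hm⟩ := exists_nat_weights D w hw0 hw
    exact blowup hn D m hm
  constructor
  · constructor
    · intro h2 n hn D w hw0
      by_contra hc
      push_neg at hc
      obtain ⟨N, hN, D', hD'⟩ := key ⟨n, hn, D, w, hw0, hc⟩
      obtain ⟨i, hi⟩ := h2 N hN D'
      exact absurd (hD' i) (not_lt.mpr hi)
    · intro h3 n hn D
      exact h3 n hn D (fun _ => 1) (fun _ => zero_le_one)
  · constructor
    · exact key
    · rintro ⟨n, hn, D, hD⟩
      exact ⟨n, hn, D, (fun _ => 1), fun _ => zero_le_one, hD⟩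
end

section
/- Let D be a digraph with vertices v₁, …, vₙ and let u₁, …, uₙ be positive integers. Let D* be the blow-up digraph whose vertex set is the disjoint union of sets V₁, …, Vₙ with |V_i| = u_i, with an arc from every element of V_i to every element of V_j whenever (v_i, v_j) is an arc of D. Then for every vertex x of D* lying in V_i, the x-component of S_{D*}·𝟏 equals the i-th component of S_D·u, where u = (u₁, …, uₙ)ᵀ. In particular, if S_D·u > 𝟎 then S_{D*}·𝟏 > 𝟎. -/
open Matrix

/-- The blow-up digraph `D*` of a digraph `D` on `Fin n` with multiplicities
`u : Fin n → ℕ`: vertex `v i` is replaced by the set `V i = Fin (u i)`, and there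
is an arc from every element of `V i` to every element of `V j` whenever
`(v i, v j)` is an arc of `D`. -/
def SimpleDigraph.blowup {n : ℕ} (D : SimpleDigraph (Fin n)) (u : Fin n → ℕ) :
    SimpleDigraph (Σ i : Fin n, Fin (u i)) where
  Adj x y := D.Adj x.1 y.1
  loopless := by
    rintro ⟨i, a⟩ h
    exact D.loopless i h
  no_opposite := by
    rintro ⟨i, a⟩ ⟨j, b⟩ h h'
    exact D.no_opposite _ _ h h'


lemma blowup_distTwo_iff {n : ℕ} (D : SimpleDigraph (Fin n)) (u : Fin n → ℕ)
    (hu : ∀ i, 0 < u i) (x y : Σ i : Fin n, Fin (u i)) :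
    (D.blowup u).DistTwo x y ↔ D.DistTwo x.1 y.1 := by
  constructor
  · rintro ⟨hne, hna, w, h1, h2⟩
    refine ⟨?_, hna, w.1, h1, h2⟩
    intro h
    exact D.no_opposite _ _ h1 (h ▸ h2)
  · rintro ⟨hne, hna, j, h1, h2⟩
    exact ⟨fun h => hne (congrArg Sigma.fst h), hna, ⟨j, ⟨0, hu j⟩⟩, h1, h2⟩

lemma blowup_sMatrix_apply {n : ℕ} (D : SimpleDigraph (Fin n)) (u : Fin n → ℕ)
    (hu : ∀ i, 0 < u i) (x y : Σ i : Fin n, Fin (u i)) :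
    (D.blowup u).sMatrix x y = D.sMatrix x.1 y.1 := by
  classical
  have hd := blowup_distTwo_iff D u hu x y
  simp only [SimpleDigraph.sMatrix, Matrix.of_apply, hd]
  rfl

/-- For every vertex `x` of the blow-up `D*` lying in `V i`, the `x`-component of
`S_{D*} · 𝟏` equals the `i`-th component of `S_D · u`; in particular, if
`S_D · u > 𝟎` then `S_{D*} · 𝟏 > 𝟎`. -/
theorem blowup_sMatrix_mulVec_one {n : ℕ} (hn : 0 < n)
    (D : SimpleDigraph (Fin n)) (u : Fin n → ℕ) (hu : ∀ i, 0 < u i) :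
    (∀ x : Σ i : Fin n, Fin (u i),
      ((D.blowup u).sMatrix *ᵥ fun _ => (1 : ℝ)) x =
        (D.sMatrix *ᵥ fun i => (u i : ℝ)) x.1) ∧
    ((∀ i, 0 < (D.sMatrix *ᵥ fun i => (u i : ℝ)) i) →
      ∀ x, 0 < ((D.blowup u).sMatrix *ᵥ fun _ => (1 : ℝ)) x) := by
  classical
  have key : ∀ x : Σ i : Fin n, Fin (u i),
      ((D.blowup u).sMatrix *ᵥ fun _ => (1 : ℝ)) x =
        (D.sMatrix *ᵥ fun i => (u i : ℝ)) x.1 := by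
    intro x
    simp only [Matrix.mulVec, dotProduct, mul_one]
    rw [← Finset.univ_sigma_univ, Finset.sum_sigma]
    congr 1
    ext j
    rw [Finset.sum_congr rfl fun a _ => blowup_sMatrix_apply D u hu x ⟨j, a⟩]
    simp [mul_comm]
  refine ⟨key, fun h x => ?_⟩
  rw [key x]
  exact h x.1
end

section
/- For every digraph D, the following are equivalent: (a) there is no non-zero weight vector w with S_D·w ≤ 𝟎 (i.e., D is a counterexample to Conjecture C4); (b) there exists a nonnegative real vector p with S_Dᵀ·p > 𝟎 (i.e., the reverse digraph ←D is a counterexample to Conjecture C3). In particular, Conjectures C3 and C4 are equivalent. -/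
open Matrix

/-- Conjecture C4: for every digraph `D` there is a non-zero weight vector `w`
with `S_D · w ≤ 𝟎`. -/
def ConjC4 : Prop :=
  ∀ (n : ℕ), 0 < n → ∀ D : SimpleDigraph (Fin n),
    ∃ w : Fin n → ℝ, (∀ i, 0 ≤ w i) ∧ w ≠ 0 ∧ D.sMatrix *ᵥ w ≤ 0

/-! By Gordan's alternative, for a real matrix `A` exactly one of the systems
`A w ≤ 0, w ≥ 0, w ≠ 0` and `Aᵀ p > 0, p ≥ 0` is solvable. Reversing the arcs of `D` transposes
`S_D`, so a counterexample to C4 is exactly the reverse of a counterexample to C3. -/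

namespace Matrix

variable {m n : Type*} [Fintype m] [Fintype n]

theorem not_exists_nonneg_mulVec_nonpos_of_transpose_mulVec_pos (A : Matrix m n ℝ)
    {p : m → ℝ} (hp : ∀ i, 0 ≤ p i) (hpA : ∀ j, 0 < (Aᵀ *ᵥ p) j) :
    ¬ ∃ w : n → ℝ, (∀ j, 0 ≤ w j) ∧ w ≠ 0 ∧ A *ᵥ w ≤ 0 := by
  rintro ⟨w, hw, hw0, hAw⟩
  obtain ⟨j, hj⟩ := Function.ne_iff.mp hw0
  have hle : p ⬝ᵥ (A *ᵥ w) ≤ 0 :=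
    Finset.sum_nonpos fun i _ => mul_nonpos_of_nonneg_of_nonpos (hp i) (hAw i)
  have hpos : 0 < (Aᵀ *ᵥ p) ⬝ᵥ w :=
    Finset.sum_pos' (fun i _ => mul_nonneg (hpA i).le (hw i))
      ⟨j, Finset.mem_univ j, mul_pos (hpA j) ((hw j).lt_of_ne' hj)⟩
  rw [mulVec_transpose, ← dotProduct_mulVec] at hpos
  linarith

/-- The image of the standard simplex under `-A` is a compact convex set missing the nonnegative
orthant; a functional separating the two is `x ↦ p ⬝ᵥ x` with `p ≥ 0` and `Aᵀ p > 0`. -/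
theorem exists_nonneg_transpose_mulVec_pos (A : Matrix m n ℝ)
    (hA : ¬ ∃ w : n → ℝ, (∀ j, 0 ≤ w j) ∧ w ≠ 0 ∧ A *ᵥ w ≤ 0) :
    ∃ p : m → ℝ, (∀ i, 0 ≤ p i) ∧ ∀ j, 0 < (Aᵀ *ᵥ p) j := by
  classical
  set K := (-A).mulVecLin '' stdSimplex ℝ n
  have hKconv : Convex ℝ K := (convex_stdSimplex ℝ n).linear_image _
  have hKcomp : IsCompact K :=
    (isCompact_stdSimplex ℝ n).image (LinearMap.continuous_of_finiteDimensional _)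
  have hKdisj : Disjoint K (ProperCone.positive ℝ (m → ℝ)) := by
    refine Set.disjoint_left.mpr ?_
    rintro _ ⟨w, hw, rfl⟩ hpos
    refine hA ⟨w, hw.1, fun h => by subst h; simpa using hw.2, fun i => ?_⟩
    simpa [neg_mulVec] using hpos i
  obtain ⟨f, hf_nonneg, hf_neg⟩ := (ProperCone.positive ℝ (m → ℝ)).hyperplane_separation
    hKconv hKcomp hKdisj
  set p := (dotProductEquiv ℝ m).symm (f : Module.Dual ℝ (m → ℝ))
  have hf : ∀ x, f x = p ⬝ᵥ x := fun x =>
    (LinearMap.congr_fun ((dotProductEquiv ℝ m).apply_symm_apply (f : Module.Dual ℝ _)) x).symm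
  refine ⟨p, fun i => hf_nonneg _ (by simp [Pi.single_nonneg]), fun j => ?_⟩
  have := hf_neg _ ⟨Pi.single j 1, single_mem_stdSimplex ℝ j, rfl⟩
  rw [hf, mulVecLin_apply, neg_mulVec, dotProduct_neg, dotProduct_mulVec, dotProduct_single_one,
    ← mulVec_transpose] at this
  linarith

theorem gordan (A : Matrix m n ℝ) :
    (¬ ∃ w : n → ℝ, (∀ j, 0 ≤ w j) ∧ w ≠ 0 ∧ A *ᵥ w ≤ 0) ↔
      ∃ p : m → ℝ, (∀ i, 0 ≤ p i) ∧ ∀ j, 0 < (Aᵀ *ᵥ p) j :=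
  ⟨A.exists_nonneg_transpose_mulVec_pos, fun ⟨_, hp, hpA⟩ =>
    A.not_exists_nonneg_mulVec_nonpos_of_transpose_mulVec_pos hp hpA⟩

end Matrix

namespace SimpleDigraph

variable {V : Type}

def reverse (D : SimpleDigraph V) : SimpleDigraph V where
  Adj u v := D.Adj v u
  loopless v := D.loopless v
  no_opposite u v huv hvu := D.no_opposite v u huv hvu

@[simp]
theorem reverse_adj {D : SimpleDigraph V} {u v : V} : D.reverse.Adj u v ↔ D.Adj v u := .rfl

theorem distTwo_reverse {D : SimpleDigraph V} {u v : V} : D.reverse.DistTwo u v ↔ D.DistTwo v u :=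
  ⟨fun ⟨hne, hnadj, w, huw, hwv⟩ => ⟨hne.symm, hnadj, w, hwv, huw⟩,
    fun ⟨hne, hnadj, w, huw, hwv⟩ => ⟨hne.symm, hnadj, w, hwv, huw⟩⟩

theorem sMatrix_reverse (D : SimpleDigraph V) : D.reverse.sMatrix = D.sMatrixᵀ := by
  classical
  ext i j
  exact if_congr reverse_adj rfl (if_congr distTwo_reverse rfl rfl)

end SimpleDigraph

theorem counterexample_C4_iff_reverse_counterexample_C3_general
    {n : ℕ} (D : SimpleDigraph (Fin n)) :
    ((¬ ∃ w : Fin n → ℝ, (∀ i, 0 ≤ w i) ∧ w ≠ 0 ∧ D.sMatrix *ᵥ w ≤ 0) ↔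
      ∃ p : Fin n → ℝ, (∀ i, 0 ≤ p i) ∧ ∀ i, 0 < (D.sMatrixᵀ *ᵥ p) i) ∧
    (ConjC3 ↔ ConjC4) := by
  refine ⟨D.sMatrix.gordan, fun hC3 m hm E => ?_, fun hC4 m hm E w hw => ?_⟩
  · by_contra hE
    obtain ⟨p, hp, hpos⟩ := E.sMatrix.gordan.mp hE
    obtain ⟨i, hi⟩ := hC3 m hm E.reverse p hp
    rw [SimpleDigraph.sMatrix_reverse] at hi
    exact (hpos i).not_ge hi
  · by_contra! hpos
    refine E.reverse.sMatrix.gordan.mpr ⟨w, hw, ?_⟩ (hC4 m hm E.reverse)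
    rwa [SimpleDigraph.sMatrix_reverse, transpose_transpose]

/-- A digraph `D` admits no non-zero weight vector `w` with `S_D · w ≤ 𝟎`
(i.e. `D` is a counterexample to Conjecture C4) if and only if there is a
nonnegative vector `p` with `S_Dᵀ · p > 𝟎` (i.e. the reverse digraph is a
counterexample to Conjecture C3).  In particular, C3 and C4 are equivalent. -/
theorem counterexample_C4_iff_reverse_counterexample_C3
    {n : ℕ} (hn : 0 < n) (D : SimpleDigraph (Fin n)) :
    ((¬ ∃ w : Fin n → ℝ, (∀ i, 0 ≤ w i) ∧ w ≠ 0 ∧ D.sMatrix *ᵥ w ≤ 0) ↔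
      ∃ p : Fin n → ℝ, (∀ i, 0 ≤ p i) ∧ ∀ i, 0 < (D.sMatrixᵀ *ᵥ p) i) ∧
    (ConjC3 ↔ ConjC4) :=
  counterexample_C4_iff_reverse_counterexample_C3_general D
end

section
/- For every digraph D, the following are equivalent: (a) there is no real vector v having at least one positive component such that S_D·v ≤ 𝟎 (i.e., D is a counterexample to Conjecture C5); (b) S_D is invertible and every entry of S_D⁻¹ is nonnegative (i.e., D is a counterexample to Conjecture C6). In particular, Conjectures C5 and C6 are equivalent, with the same set of counterexamples. -/
open Matrix

/-- Conjecture C5: for every digraph `D` there is a real vector `v` with at least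
one positive component such that `S_D · v ≤ 𝟎`. -/
def ConjC5 : Prop :=
  ∀ (n : ℕ), 0 < n → ∀ D : SimpleDigraph (Fin n),
    ∃ v : Fin n → ℝ, (∃ i, 0 < v i) ∧ D.sMatrix *ᵥ v ≤ 0

/-- Conjecture C6: there is no digraph `D` such that `S_D` is invertible and every
entry of `S_D⁻¹` is nonnegative. -/
def ConjC6 : Prop :=
  ¬ ∃ (n : ℕ) (D : SimpleDigraph (Fin n)), 0 < n ∧
    IsUnit D.sMatrix ∧ ∀ i j, 0 ≤ D.sMatrix⁻¹ i j

/-- Key linear-algebra lemma: for a real square matrix `S`, there is no vector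
with a positive component mapped by `S` to a nonpositive vector iff `S` is
invertible with entrywise nonnegative inverse. -/
lemma key_matrix_lemma {n : ℕ} (S : Matrix (Fin n) (Fin n) ℝ) :
    (¬ ∃ v : Fin n → ℝ, (∃ i, 0 < v i) ∧ S *ᵥ v ≤ 0) ↔
      (IsUnit S ∧ ∀ i j, 0 ≤ S⁻¹ i j) := by
  constructor
  · intro h
    have hv0 : ∀ v : Fin n → ℝ, S *ᵥ v ≤ 0 → v ≤ 0 := by
      intro v hSv i
      by_contra hpos
      exact h ⟨v, ⟨i, lt_of_not_ge hpos⟩, hSv⟩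
    have hdet : S.det ≠ 0 := by
      intro hdet
      obtain ⟨v, hvne, hv⟩ := (Matrix.exists_mulVec_eq_zero_iff).2 hdet
      have h1 : v ≤ 0 := hv0 v (le_of_eq hv)
      have h2 : -v ≤ 0 := hv0 (-v) (by rw [Matrix.mulVec_neg, hv, neg_zero])
      exact hvne (funext fun i => le_antisymm (h1 i) (by simpa using h2 i))
    have hU : IsUnit S := (Matrix.isUnit_iff_isUnit_det S).2 (isUnit_iff_ne_zero.2 hdet)
    refine ⟨hU, fun i j => ?_⟩
    set v : Fin n → ℝ := S⁻¹ *ᵥ (Pi.single j (-1)) with hvdef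
    have hSv : S *ᵥ v ≤ 0 := by
      rw [hvdef, Matrix.mulVec_mulVec, Matrix.mul_nonsing_inv S (isUnit_iff_ne_zero.2 hdet), Matrix.one_mulVec]
      intro k
      rcases eq_or_ne k j with rfl | hk
      · simp
      · simp [Pi.single_eq_of_ne hk]
    have hvle : v i ≤ 0 := hv0 v hSv i
    have hvi : v i = -S⁻¹ i j := by
      rw [hvdef]
      simp [Matrix.mulVec, dotProduct, Pi.single_apply, mul_ite]
    rw [hvi] at hvle
    linarith
  · rintro ⟨hU, hpos⟩ ⟨v, ⟨i, hi⟩, hSv⟩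
    have hdet : S.det ≠ 0 := by
      have := (Matrix.isUnit_iff_isUnit_det S).1 hU
      exact isUnit_iff_ne_zero.1 this
    have hvi : v = S⁻¹ *ᵥ (S *ᵥ v) := by
      rw [Matrix.mulVec_mulVec, Matrix.nonsing_inv_mul S (isUnit_iff_ne_zero.2 hdet), Matrix.one_mulVec]
    have hle : v i ≤ 0 := by
      rw [hvi]
      show ∑ k, S⁻¹ i k * (S *ᵥ v) k ≤ 0
      apply Finset.sum_nonpos
      intro k _
      exact mul_nonpos_of_nonneg_of_nonpos (hpos i k) (hSv k)
    linarith

/-- A digraph `D` admits no vector with at least one positive component `v` with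
`S_D · v ≤ 𝟎` (i.e. `D` is a counterexample to Conjecture C5) if and only if
`S_D` is invertible and every entry of `S_D⁻¹` is nonnegative (i.e. `D` is a
counterexample to Conjecture C6).  In particular, C5 and C6 are equivalent. -/
theorem counterexample_C5_iff_counterexample_C6
    {n : ℕ} (hn : 0 < n) (D : SimpleDigraph (Fin n)) :
    ((¬ ∃ v : Fin n → ℝ, (∃ i, 0 < v i) ∧ D.sMatrix *ᵥ v ≤ 0) ↔
      (IsUnit D.sMatrix ∧ ∀ i j, 0 ≤ D.sMatrix⁻¹ i j)) ∧
    (ConjC5 ↔ ConjC6) := by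
  refine ⟨key_matrix_lemma _, ?_⟩
  constructor
  · rintro h5 ⟨m, E, hm, hU, hinv⟩
    exact ((key_matrix_lemma E.sMatrix).2 ⟨hU, hinv⟩) (h5 m hm E)
  · intro h6 m hm E
    by_contra hno
    exact h6 ⟨m, E, hm, (key_matrix_lemma E.sMatrix).1 hno⟩
end

section
/- For every digraph D: if S_D·𝟏 > 𝟎 (every component of S_D·𝟏 is positive), then there is no non-zero weight vector w with S_Dᵀ·w ≤ 𝟎. (That is, if D is a counterexample to Conjecture C2, then the reverse digraph ←D is a counterexample to Conjecture C4.) -/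
open Matrix

/-- If `D` is a counterexample to Conjecture C2, that is `S_D · 𝟏 > 𝟎`, then the
reverse digraph is a counterexample to Conjecture C4: there is no non-zero weight
vector `w` with `S_Dᵀ · w ≤ 𝟎`. -/
theorem counterexample_C2_reverse_counterexample_C4
    {n : ℕ} (hn : 0 < n) (D : SimpleDigraph (Fin n))
    (hD : ∀ i, 0 < (D.sMatrix *ᵥ fun _ => (1 : ℝ)) i) :
    ¬ ∃ w : Fin n → ℝ, (∀ i, 0 ≤ w i) ∧ w ≠ 0 ∧ D.sMatrixᵀ *ᵥ w ≤ 0 := by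
  rintro ⟨w, hw0, hwne, hle⟩
  -- key sum identity
  have key : ∑ j, (D.sMatrixᵀ *ᵥ w) j = ∑ i, w i * (D.sMatrix *ᵥ fun _ => (1 : ℝ)) i := by
    simp only [Matrix.mulVec, dotProduct, Matrix.transpose_apply, mul_one]
    rw [Finset.sum_comm]
    simp [mul_comm, Finset.mul_sum]
  have hpos : 0 < ∑ i, w i * (D.sMatrix *ᵥ fun _ => (1 : ℝ)) i := by
    obtain ⟨k, hk⟩ : ∃ k, w k ≠ 0 := by
      by_contra h
      push_neg at h
      exact hwne (funext fun i => h i)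
    have hk' : 0 < w k := lt_of_le_of_ne (hw0 k) (Ne.symm hk)
    apply Finset.sum_pos' (fun i _ => mul_nonneg (hw0 i) (hD i).le)
    exact ⟨k, Finset.mem_univ k, mul_pos hk' (hD k)⟩
  have hneg : ∑ j, (D.sMatrixᵀ *ᵥ w) j ≤ 0 :=
    Finset.sum_nonpos fun j _ => hle j
  rw [key] at hneg
  exact absurd hneg (not_le.mpr hpos)
end

section
/- Every minimal counterexample to Conjecture C4 is a counterexample to Conjecture C6. Precisely: if D is a digraph admitting no non-zero weight vector w with S_D·w ≤ 𝟎, and every digraph with strictly fewer arcs than D does admit such a non-zero weight vector, then S_D is invertible and every entry of S_D⁻¹ is nonnegative. -/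
/-!
Let `D` be a minimal counterexample. Every vertex `a` has an out-neighbour, so deleting the arcs
leaving `a` lowers the number of arcs, and a weight `w_a` of the smaller digraph satisfies
`(S_D w_a)_i ≤ 0` for every `i ≠ a`. With `W` the matrix of columns `w_a`, the matrix `A = S_D W`
has non-positive off-diagonal entries, and a weight `l` with `A l ≤ 0` would make `W l` a weight
for `D`. Hence `A` is monotone (`A x ≥ 0 → x ≥ 0`), so it is invertible with `A⁻¹ ≥ 0`, and
`S_D⁻¹ = W A⁻¹ ≥ 0`.
-/

open Matrix

namespace Matrix

variable {ι : Type*} [Fintype ι]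

def HasNonposWeight (A : Matrix ι ι ℝ) : Prop :=
  ∃ w : ι → ℝ, 0 ≤ w ∧ w ≠ 0 ∧ A *ᵥ w ≤ 0

/-- Monotone matrices in the sense of Collatz. -/
def IsMonotone (A : Matrix ι ι ℝ) : Prop :=
  ∀ x, 0 ≤ A *ᵥ x → 0 ≤ x

lemma mulVec_apply_nonpos_of_apply_eq_zero {A : Matrix ι ι ℝ} (hA : ∀ i j, i ≠ j → A i j ≤ 0)
    {v : ι → ℝ} (hv : 0 ≤ v) {i : ι} (hvi : v i = 0) : (A *ᵥ v) i ≤ 0 := by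
  refine Finset.sum_nonpos fun j _ => ?_
  rcases eq_or_ne i j with rfl | hij
  · simp [hvi]
  · exact mul_nonpos_of_nonpos_of_nonneg (hA i j hij) (hv j)

lemma isMonotone_of_not_hasNonposWeight {A : Matrix ι ι ℝ} (hA : ∀ i j, i ≠ j → A i j ≤ 0)
    (hw : ¬ A.HasNonposWeight) : A.IsMonotone := by
  intro x hx
  -- otherwise the negative part `x⁻` is a weight with `A x⁻ ≤ 0`
  have hneg : A *ᵥ x⁻ ≤ 0 := by
    intro i
    rcases le_total 0 (x i) with hxi | hxi
    · exact mulVec_apply_nonpos_of_apply_eq_zero hA (negPart_nonneg x) (by simpa using hxi)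
    · have hpos : (A *ᵥ x⁺) i ≤ 0 :=
        mulVec_apply_nonpos_of_apply_eq_zero hA (posPart_nonneg x) (by simpa using hxi)
      have hsplit : A *ᵥ x⁻ = A *ᵥ x⁺ - A *ᵥ x := eq_sub_of_add_eq <| by
        rw [← mulVec_add, (sub_eq_iff_eq_add'.mp (posPart_sub_negPart x)).symm]
      simpa [hsplit] using hpos.trans (le_add_of_nonneg_right (hx i))
  by_contra hx0
  exact hw ⟨x⁻, negPart_nonneg x, negPart_eq_zero.not.mpr hx0, hneg⟩

namespace IsMonotone

variable [DecidableEq ι] {A : Matrix ι ι ℝ}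

lemma isUnit (hA : A.IsMonotone) : IsUnit A := by
  refine mulVec_injective_iff_isUnit.mp fun x y hxy => ?_
  have h : A *ᵥ (x - y) = 0 := by rw [mulVec_sub, hxy, sub_self]
  have h' : A *ᵥ (y - x) = 0 := by rw [mulVec_sub, hxy, sub_self]
  exact le_antisymm (sub_nonneg.mp (hA _ h'.ge)) (sub_nonneg.mp (hA _ h.ge))

lemma inv_apply_nonneg (hA : A.IsMonotone) (i j : ι) : 0 ≤ A⁻¹ i j := by
  have hdet := (isUnit_iff_isUnit_det A).mp hA.isUnit
  have hcol : A *ᵥ (A⁻¹ *ᵥ Pi.single j 1) = Pi.single j 1 := by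
    rw [mulVec_mulVec, mul_nonsing_inv A hdet, one_mulVec]
  have := hA _ (hcol ▸ Pi.single_nonneg.mpr zero_le_one) i
  rwa [mulVec_single_one, col_apply] at this

end IsMonotone

lemma mulVec_ne_zero_of_nonneg {W : Matrix ι ι ℝ} (hW : ∀ i j, 0 ≤ W i j)
    (hcol : ∀ j, W.col j ≠ 0) {l : ι → ℝ} (hl : 0 ≤ l) (hl0 : l ≠ 0) : W *ᵥ l ≠ 0 := by
  obtain ⟨a, ha⟩ := Function.ne_iff.mp hl0
  obtain ⟨i, hi⟩ := Function.ne_iff.mp (hcol a)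
  have hpos : 0 < W i a * l a :=
    mul_pos ((hW i a).lt_of_ne (Ne.symm hi)) ((hl a).lt_of_ne (Ne.symm ha))
  have hle : W i a * l a ≤ (W *ᵥ l) i :=
    Finset.single_le_sum (f := fun b => W i b * l b)
      (fun b _ => mul_nonneg (hW i b) (hl b)) (Finset.mem_univ a)
  exact Function.ne_iff.mpr ⟨i, (hpos.trans_le hle).ne'⟩

theorem isUnit_and_inv_nonneg_of_forall_exists_weight [DecidableEq ι] {S : Matrix ι ι ℝ}
    (hS : ¬ S.HasNonposWeight)
    (hw : ∀ a, ∃ w : ι → ℝ, 0 ≤ w ∧ w ≠ 0 ∧ ∀ i, i ≠ a → (S *ᵥ w) i ≤ 0) :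
    IsUnit S ∧ ∀ i j, 0 ≤ S⁻¹ i j := by
  choose w hw0 hwne hwS using hw
  set W : Matrix ι ι ℝ := (of w)ᵀ
  have hSW : ∀ i a, (S * W) i a = (S *ᵥ w a) i := fun i a => by
    simp [W, mul_apply, mulVec, dotProduct]
  have hSW_weight : ¬ (S * W).HasNonposWeight := by
    rintro ⟨l, hl0, hlne, hl⟩
    refine hS ⟨W *ᵥ l, fun i => Finset.sum_nonneg fun a _ => mul_nonneg (hw0 a i) (hl0 a),
      mulVec_ne_zero_of_nonneg (fun i a => hw0 a i) hwne hl0 hlne, ?_⟩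
    rwa [mulVec_mulVec]
  have hmono : (S * W).IsMonotone :=
    isMonotone_of_not_hasNonposWeight (fun i a h => hSW i a ▸ hwS a i h) hSW_weight
  have hdet := (isUnit_iff_isUnit_det _).mp hmono.isUnit
  have hinv : S * (W * (S * W)⁻¹) = 1 := by rw [← Matrix.mul_assoc, mul_nonsing_inv _ hdet]
  refine ⟨(isUnit_iff_isUnit_det S).mpr (isUnit_det_of_right_inverse hinv), fun i j => ?_⟩
  rw [inv_eq_right_inv hinv]
  exact Finset.sum_nonneg fun k _ => mul_nonneg (hw0 k i) (hmono.inv_apply_nonneg k j)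

end Matrix

namespace SimpleDigraph

variable {V W : Type}

lemma sMatrix_of_adj (D : SimpleDigraph V) {i j : V} (h : D.Adj i j) : D.sMatrix i j = 1 := by
  simp [sMatrix, h]

lemma sMatrix_of_distTwo (D : SimpleDigraph V) {i j : V} (h : D.DistTwo i j) :
    D.sMatrix i j = -1 := by
  simp [sMatrix, h, h.2.1]

lemma sMatrix_of_not_adj_of_not_distTwo (D : SimpleDigraph V) {i j : V} (h₁ : ¬ D.Adj i j)
    (h₂ : ¬ D.DistTwo i j) : D.sMatrix i j = 0 := by
  simp [sMatrix, h₁, h₂]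

lemma neg_one_le_sMatrix (D : SimpleDigraph V) (i j : V) : -1 ≤ D.sMatrix i j := by
  simp only [sMatrix, of_apply]
  split_ifs <;> norm_num

lemma sMatrix_eq_zero_of_no_out_arcs (D : SimpleDigraph V) {v : V} (hv : ∀ x, ¬ D.Adj v x)
    (j : V) : D.sMatrix v j = 0 :=
  D.sMatrix_of_not_adj_of_not_distTwo (hv j) fun ⟨_, _, x, hvx, _⟩ => hv x hvx

lemma sMatrix_eq_zero_of_no_in_arcs (D : SimpleDigraph V) {v : V} (hv : ∀ x, ¬ D.Adj x v)
    (i : V) : D.sMatrix i v = 0 :=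
  D.sMatrix_of_not_adj_of_not_distTwo (hv i) fun ⟨_, _, x, _, hxv⟩ => hv x hxv

lemma sMatrix_le_of_le {D E : SimpleDigraph V} (hED : ∀ x y, E.Adj x y → D.Adj x y) {i : V}
    (hi : ∀ j, D.Adj i j → E.Adj i j) (j : V) : D.sMatrix i j ≤ E.sMatrix i j := by
  by_cases hadj : D.Adj i j
  · rw [D.sMatrix_of_adj hadj, E.sMatrix_of_adj (hi j hadj)]
  by_cases hdist : D.DistTwo i j
  · rw [D.sMatrix_of_distTwo hdist]
    exact E.neg_one_le_sMatrix i j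
  rw [D.sMatrix_of_not_adj_of_not_distTwo hadj hdist,
    E.sMatrix_of_not_adj_of_not_distTwo (fun h => hadj (hED i j h))]
  rintro ⟨hij, -, x, hix, hxj⟩
  exact hdist ⟨hij, hadj, x, hED i x hix, hED x j hxj⟩

lemma numArcs_lt_of_injective [Finite V] {D : SimpleDigraph V} {E : SimpleDigraph W}
    (f : W → V) (hf : Function.Injective f) (hE : ∀ i j, E.Adj i j → D.Adj (f i) (f j))
    {a b : V} (hab : D.Adj a b) (hmiss : ∀ i j, E.Adj i j → (f i, f j) ≠ (a, b)) :
    E.numArcs < D.numArcs := by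
  let g : {p : W × W // E.Adj p.1 p.2} → {p : V × V // D.Adj p.1 p.2} :=
    fun p => ⟨(f p.1.1, f p.1.2), hE _ _ p.2⟩
  have hg : Function.Injective g := by
    rintro ⟨⟨i, j⟩, _⟩ ⟨⟨i', j'⟩, _⟩ h
    simp only [g, Subtype.mk.injEq, Prod.mk.injEq] at h
    exact Subtype.ext (Prod.ext (hf h.1) (hf h.2))
  have : Finite {p : W × W // E.Adj p.1 p.2} := Finite.of_injective g hg
  have := Fintype.ofFinite {p : W × W // E.Adj p.1 p.2}
  have := Fintype.ofFinite {p : V × V // D.Adj p.1 p.2}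
  simp only [numArcs, Nat.card_eq_fintype_card]
  refine Fintype.card_lt_of_injective_of_notMem g hg (b := ⟨(a, b), hab⟩) ?_
  rintro ⟨⟨⟨i, j⟩, h⟩, hij⟩
  exact hmiss i j h (congrArg Subtype.val hij)

lemma hasNonposWeight_of_no_in_arcs [Fintype V] [DecidableEq V] (D : SimpleDigraph V) {v : V}
    (hv : ∀ x, ¬ D.Adj x v) : D.sMatrix.HasNonposWeight := by
  refine ⟨Pi.single v 1, Pi.single_nonneg.mpr zero_le_one, by simp, fun i => ?_⟩
  simp [D.sMatrix_eq_zero_of_no_in_arcs hv]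

def comap (D : SimpleDigraph V) (f : W → V) : SimpleDigraph W where
  Adj i j := D.Adj (f i) (f j)
  loopless i := D.loopless (f i)
  no_opposite i j := D.no_opposite (f i) (f j)

lemma sMatrix_comap {D : SimpleDigraph V} {f : W → V} (hf : Function.Injective f)
    (hmid : ∀ i j x, D.Adj (f i) x → D.Adj x (f j) → x ∈ Set.range f) (i j : W) :
    (D.comap f).sMatrix i j = D.sMatrix (f i) (f j) := by
  have hdist : (D.comap f).DistTwo i j ↔ D.DistTwo (f i) (f j) := by
    refine ⟨fun ⟨hij, hadj, x, hix, hxj⟩ => ⟨hf.ne hij, hadj, f x, hix, hxj⟩, ?_⟩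
    rintro ⟨hij, hadj, x, hix, hxj⟩
    obtain ⟨y, rfl⟩ := hmid i j x hix hxj
    exact ⟨fun h => hij (congrArg f h), hadj, y, hix, hxj⟩
  classical
  simp only [sMatrix, of_apply]
  exact if_congr Iff.rfl rfl (if_congr hdist rfl rfl)

/-- Extend the weight by zero: the rows of the deleted sinks vanish, and the sinks are never the
middle vertex of a path of length `2`. -/
lemma hasNonposWeight_of_comap [Fintype V] [Fintype W] {D : SimpleDigraph V} {f : W → V}
    (hf : Function.Injective f) (hsink : ∀ v ∉ Set.range f, ∀ x, ¬ D.Adj v x)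
    (h : (D.comap f).sMatrix.HasNonposWeight) : D.sMatrix.HasNonposWeight := by
  obtain ⟨w, hw0, hwne, hw⟩ := h
  have hext : ∀ i, Function.extend f w 0 (f i) = w i := hf.extend_apply w 0
  refine ⟨Function.extend f w 0, fun v => ?_, fun h0 => hwne ?_, fun v => ?_⟩
  · by_cases hv : ∃ i, f i = v
    · obtain ⟨i, rfl⟩ := hv
      exact (hext i).symm ▸ hw0 i
    · simp [Function.extend_apply' _ _ _ hv]
  · ext i
    rw [← hext, h0, Pi.zero_apply, Pi.zero_apply]
  by_cases hv : v ∈ Set.range f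
  · obtain ⟨i, rfl⟩ := hv
    have hmid : ∀ i j x, D.Adj (f i) x → D.Adj x (f j) → x ∈ Set.range f :=
      fun _ j x _ hxj => by_contra fun hx => hsink x hx (f j) hxj
    have hsum : (D.sMatrix *ᵥ Function.extend f w 0) (f i) = ((D.comap f).sMatrix *ᵥ w) i := by
      refine (Fintype.sum_of_injective f hf _ _ (fun v hv => ?_) fun j => ?_).symm
      · simp [Function.extend_apply' _ _ _ fun ⟨j, hj⟩ => hv ⟨j, hj⟩]
      · dsimp only
        rw [sMatrix_comap hf hmid, hext]
    exact hsum ▸ hw i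
  · exact (Finset.sum_eq_zero fun j _ => by
      simp [D.sMatrix_eq_zero_of_no_out_arcs (hsink v hv)]).le

def deleteOutArcs (D : SimpleDigraph V) (a : V) : SimpleDigraph V where
  Adj i j := i ≠ a ∧ D.Adj i j
  loopless i h := D.loopless i h.2
  no_opposite i j h h' := D.no_opposite i j h.2 h'.2

lemma numArcs_deleteOutArcs_lt [Finite V] (D : SimpleDigraph V) {a b : V} (hab : D.Adj a b) :
    (D.deleteOutArcs a).numArcs < D.numArcs :=
  numArcs_lt_of_injective id Function.injective_id (fun _ _ h => h.2) hab
    fun _ _ h hij => h.1 (Prod.ext_iff.mp hij).1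

lemma mulVec_sMatrix_le_deleteOutArcs [Fintype V] (D : SimpleDigraph V) {a i : V} (hi : i ≠ a)
    {w : V → ℝ} (hw : 0 ≤ w) : (D.sMatrix *ᵥ w) i ≤ ((D.deleteOutArcs a).sMatrix *ᵥ w) i :=
  Finset.sum_le_sum fun j _ => mul_le_mul_of_nonneg_right
    (sMatrix_le_of_le (E := D.deleteOutArcs a) (fun _ _ h => h.2) (fun _ h => ⟨hi, h⟩) j) (hw j)

/-- In a minimal counterexample to C4 every vertex `u` has an out-neighbour: otherwise `u` is a
source (and `Pi.single u 1` is a weight) or a sink entered by some arc, and deleting `u` loses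
that arc. -/
lemma exists_adj_of_minimal {n : ℕ} (D : SimpleDigraph (Fin n))
    (hD : ¬ D.sMatrix.HasNonposWeight)
    (hmin : ∀ m, 0 < m → ∀ E : SimpleDigraph (Fin m), E.numArcs < D.numArcs →
      E.sMatrix.HasNonposWeight)
    (u : Fin n) : ∃ v, D.Adj u v := by
  by_contra! hsink
  obtain ⟨a, hau⟩ : ∃ a, D.Adj a u := by
    by_contra! hsource
    exact hD (D.hasNonposWeight_of_no_in_arcs hsource)
  obtain ⟨m, rfl⟩ := Nat.exists_eq_add_one_of_ne_zero u.pos.ne'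
  have hm : 0 < m := Nat.pos_of_ne_zero fun hm => by
    subst hm
    exact D.loopless u (Subsingleton.elim (α := Fin 1) a u ▸ hau)
  have hrange : ∀ v ∉ Set.range u.succAbove, ∀ x, ¬ D.Adj v x := fun v hv =>
    (by simpa using hv : v = u) ▸ hsink
  refine hD (hasNonposWeight_of_comap Fin.succAbove_right_injective hrange (hmin m hm _ ?_))
  exact numArcs_lt_of_injective _ Fin.succAbove_right_injective (fun _ _ h => h) hau
    fun _ j _ hj => Fin.succAbove_ne u j (Prod.ext_iff.mp hj).2

end SimpleDigraph

/-- Every minimal counterexample to Conjecture C4 is a counterexample to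
Conjecture C6: if `D` admits no non-zero weight vector `w` with `S_D · w ≤ 𝟎`,
while every digraph with strictly fewer arcs admits one, then `S_D` is invertible
and every entry of `S_D⁻¹` is nonnegative. -/
theorem minimal_counterexample_C4_is_counterexample_C6
    {n : ℕ} (hn : 0 < n) (D : SimpleDigraph (Fin n))
    (hD : ¬ ∃ w : Fin n → ℝ, (∀ i, 0 ≤ w i) ∧ w ≠ 0 ∧ D.sMatrix *ᵥ w ≤ 0)
    (hmin : ∀ (m : ℕ), 0 < m → ∀ E : SimpleDigraph (Fin m),
      E.numArcs < D.numArcs →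
      ∃ w : Fin m → ℝ, (∀ i, 0 ≤ w i) ∧ w ≠ 0 ∧ E.sMatrix *ᵥ w ≤ 0) :
    IsUnit D.sMatrix ∧ ∀ i j, 0 ≤ D.sMatrix⁻¹ i j := by
  refine Matrix.isUnit_and_inv_nonneg_of_forall_exists_weight hD fun a => ?_
  obtain ⟨b, hab⟩ := D.exists_adj_of_minimal hD hmin a
  obtain ⟨w, hw0, hwne, hw⟩ := hmin n hn _ (D.numArcs_deleteOutArcs_lt hab)
  exact ⟨w, hw0, hwne, fun i hi => (D.mulVec_sMatrix_le_deleteOutArcs hi hw0).trans (hw i)⟩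
end

section
/- If D is a minimal counterexample to Conjecture C4 — that is, D admits no non-zero weight vector w with S_D·w ≤ 𝟎, while every digraph with strictly fewer arcs admits such a vector — then S_Dᵀ·𝟏 ≯ 𝟎; equivalently, D has a vertex v with d⁻(v) ≤ d⁻⁻(v), so the reverse digraph ←D is not a counterexample to Conjecture C2. -/
open Matrix

/- ============================================================= -/
/- Auxiliary material for the proof.                              -/
/- ============================================================= -/

namespace SimpleDigraphAux

open SimpleDigraph Finset

variable {n : ℕ}

open Classical in
lemma sApply (D : SimpleDigraph (Fin n)) (i j : Fin n) :
    D.sMatrix i j =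
      if D.Adj i j then 1 else if D.DistTwo i j then -1 else 0 := rfl

lemma s_adj {D : SimpleDigraph (Fin n)} {i j : Fin n} (h : D.Adj i j) :
    D.sMatrix i j = 1 := by
  rw [sApply, if_pos h]

lemma s_le_one (D : SimpleDigraph (Fin n)) (i j : Fin n) : D.sMatrix i j ≤ 1 := by
  rw [sApply]; split_ifs <;> norm_num

lemma neg_one_le_s (D : SimpleDigraph (Fin n)) (i j : Fin n) : -1 ≤ D.sMatrix i j := by
  rw [sApply]; split_ifs <;> norm_num

open Classical in
lemma s_eq_sub (D : SimpleDigraph (Fin n)) (i j : Fin n) :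
    D.sMatrix i j =
      (if D.Adj i j then (1:ℝ) else 0) - (if D.DistTwo i j then (1:ℝ) else 0) := by
  rw [sApply]
  by_cases h : D.Adj i j
  · have h2 : ¬ D.DistTwo i j := fun hd => hd.2.1 h
    simp [h, h2]
  · by_cases h2 : D.DistTwo i j <;> simp [h, h2]

open Classical in
lemma inDeg_eq (D : SimpleDigraph (Fin n)) (v : Fin n) :
    D.inDeg v = (Finset.univ.filter (fun u => D.Adj u v)).card := by
  rw [SimpleDigraph.inDeg, Nat.card_eq_fintype_card, Fintype.card_subtype]

open Classical in
lemma inDeg2_eq (D : SimpleDigraph (Fin n)) (v : Fin n) :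
    D.inDeg2 v = (Finset.univ.filter (fun u => D.DistTwo u v)).card := by
  rw [SimpleDigraph.inDeg2, Nat.card_eq_fintype_card, Fintype.card_subtype]

open Classical in
lemma numArcs_eq (D : SimpleDigraph (Fin n)) :
    D.numArcs =
      (Finset.univ.filter (fun p : Fin n × Fin n => D.Adj p.1 p.2)).card := by
  rw [SimpleDigraph.numArcs, Nat.card_eq_fintype_card, Fintype.card_subtype]

/-- Column sums of the second neighborhood matrix. -/
lemma colsum (D : SimpleDigraph (Fin n)) (j : Fin n) :
    ∑ i, D.sMatrix i j = (D.inDeg j : ℝ) - (D.inDeg2 j : ℝ) := by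
  classical
  rw [inDeg_eq, inDeg2_eq]
  calc ∑ i, D.sMatrix i j
      = ∑ i, ((if D.Adj i j then (1:ℝ) else 0) - (if D.DistTwo i j then (1:ℝ) else 0)) :=
        Finset.sum_congr rfl fun i _ => s_eq_sub D i j
    _ = (∑ i, (if D.Adj i j then (1:ℝ) else 0))
        - (∑ i, (if D.DistTwo i j then (1:ℝ) else 0)) := by
        rw [Finset.sum_sub_distrib]
    _ = ((Finset.univ.filter (fun u => D.Adj u j)).card : ℝ)
        - ((Finset.univ.filter (fun u => D.DistTwo u j)).card : ℝ) := by
        rw [Finset.sum_boole, Finset.sum_boole]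

/-- A nonnegative vector making every column-functional of `S_E` positive
certifies that `E` has no C4 weight vector. -/
lemma no_witness_of_cert {m : ℕ} (E : SimpleDigraph (Fin m)) (Y : Fin m → ℝ)
    (hY : ∀ i, 0 ≤ Y i) (hpos : ∀ j, 0 < ∑ i, E.sMatrix i j * Y i) :
    ¬ ∃ w : Fin m → ℝ, (∀ i, 0 ≤ w i) ∧ w ≠ 0 ∧ E.sMatrix *ᵥ w ≤ 0 := by
  rintro ⟨w, hw0, hwne, hwle⟩
  obtain ⟨j₀, hj₀⟩ : ∃ j, 0 < w j := by
    by_contra hc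
    push_neg at hc
    exact hwne (funext fun j => le_antisymm (hc j) (hw0 j))
  have key : (0:ℝ) < ∑ j, (∑ i, E.sMatrix i j * Y i) * w j := by
    have h2 : (0:ℝ) < (∑ i, E.sMatrix i j₀ * Y i) * w j₀ := mul_pos (hpos j₀) hj₀
    have h3 : (∑ i, E.sMatrix i j₀ * Y i) * w j₀
        ≤ ∑ j, (∑ i, E.sMatrix i j * Y i) * w j :=
      Finset.single_le_sum
        (fun j _ => mul_nonneg (le_of_lt (hpos j)) (hw0 j)) (Finset.mem_univ j₀)
    linarith
  have key2 : ∑ j, (∑ i, E.sMatrix i j * Y i) * w j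
      = ∑ i, Y i * (E.sMatrix *ᵥ w) i := by
    have h1 : ∀ i, Y i * (E.sMatrix *ᵥ w) i = ∑ j, E.sMatrix i j * Y i * w j := by
      intro i
      have h2 : (E.sMatrix *ᵥ w) i = ∑ j, E.sMatrix i j * w j := rfl
      rw [h2, Finset.mul_sum]
      exact Finset.sum_congr rfl fun j _ => by ring
    rw [Finset.sum_congr rfl fun i _ => h1 i, Finset.sum_comm]
    exact Finset.sum_congr rfl fun j _ => by rw [Finset.sum_mul]
  have key3 : ∑ i, Y i * (E.sMatrix *ᵥ w) i ≤ 0 := by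
    apply Finset.sum_nonpos
    intro i _
    have h1 : (E.sMatrix *ᵥ w) i ≤ 0 := hwle i
    calc Y i * (E.sMatrix *ᵥ w) i ≤ Y i * 0 := mul_le_mul_of_nonneg_left h1 (hY i)
      _ = 0 := mul_zero _
  rw [key2] at key
  linarith

/-- Entrywise monotonicity between second-neighborhood matrices. -/
lemma entry_mono {D E : SimpleDigraph (Fin n)} {i j : Fin n}
    (hAdj : D.Adj i j → E.Adj i j)
    (hD2 : E.DistTwo i j → D.DistTwo i j ∨ D.Adj i j) :
    D.sMatrix i j ≤ E.sMatrix i j := by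
  by_cases h1 : D.Adj i j
  · rw [s_adj h1, s_adj (hAdj h1)]
  · by_cases h2 : D.DistTwo i j
    · rw [sApply D, if_neg h1, if_pos h2]
      exact neg_one_le_s E i j
    · rw [sApply D, if_neg h1, if_neg h2, sApply E]
      split_ifs with e1 e2
      · norm_num
      · rcases hD2 e2 with h | h
        · exact absurd h h2
        · exact absurd h h1
      · exact le_refl 0

/-- Comparison of arc counts through an injection with a missing arc. -/
lemma numArcs_lt {m : ℕ} (D : SimpleDigraph (Fin n)) (E : SimpleDigraph (Fin m))
    (g : Fin m × Fin m → Fin n × Fin n) (hg : Function.Injective g)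
    (hmap : ∀ p : Fin m × Fin m, E.Adj p.1 p.2 → D.Adj (g p).1 (g p).2)
    (q : Fin n × Fin n) (hq : D.Adj q.1 q.2)
    (hqn : ∀ p : Fin m × Fin m, E.Adj p.1 p.2 → g p ≠ q) :
    E.numArcs < D.numArcs := by
  classical
  rw [numArcs_eq, numArcs_eq]
  have h1 : (Finset.univ.filter fun p : Fin m × Fin m => E.Adj p.1 p.2).card
      = ((Finset.univ.filter fun p : Fin m × Fin m => E.Adj p.1 p.2).image g).card :=
    (Finset.card_image_of_injective _ hg).symm
  rw [h1]
  apply Finset.card_lt_card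
  rw [Finset.ssubset_iff_of_subset]
  · refine ⟨q, by simp [hq], ?_⟩
    intro hmem
    rw [Finset.mem_image] at hmem
    obtain ⟨p, hp, hgp⟩ := hmem
    rw [Finset.mem_filter] at hp
    exact hqn p hp.2 hgp
  · intro x hx
    rw [Finset.mem_image] at hx
    obtain ⟨p, hp, rfl⟩ := hx
    rw [Finset.mem_filter] at hp
    simp [hmap p hp.2]

/-- Deleting a single arc. -/
def delArc (D : SimpleDigraph (Fin n)) (a b : Fin n) : SimpleDigraph (Fin n) where
  Adj x y := D.Adj x y ∧ ¬ (x = a ∧ y = b)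
  loopless v h := D.loopless v h.1
  no_opposite x y h h' := D.no_opposite x y h.1 h'.1

/-- Deleting all out-arcs of a vertex. -/
def delOut (D : SimpleDigraph (Fin n)) (u : Fin n) : SimpleDigraph (Fin n) where
  Adj x y := D.Adj x y ∧ x ≠ u
  loopless v h := D.loopless v h.1
  no_opposite x y h h' := D.no_opposite x y h.1 h'.1

/-- Reversing all arcs and deleting the (reversed) arc `(u,v)`. -/
def revDel (D : SimpleDigraph (Fin n)) (u v : Fin n) : SimpleDigraph (Fin n) where
  Adj x y := D.Adj y x ∧ ¬ (x = u ∧ y = v)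
  loopless w h := D.loopless w h.1
  no_opposite x y h h' := D.no_opposite x y h'.1 h.1

/-- Deleting a vertex, via `Fin.succAbove`. -/
def delVert {k : ℕ} (D : SimpleDigraph (Fin (k+1))) (u : Fin (k+1)) :
    SimpleDigraph (Fin k) where
  Adj x y := D.Adj (u.succAbove x) (u.succAbove y)
  loopless v h := D.loopless _ h
  no_opposite x y h h' := D.no_opposite _ _ h h'

end SimpleDigraphAux

open SimpleDigraphAux Finset

/-- If `D` is a minimal counterexample to Conjecture C4, then `S_Dᵀ · 𝟏 ≯ 𝟎`;
equivalently, `D` has a vertex `v` with `d⁻(v) ≤ d⁻⁻(v)`, so the reverse digraph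
is not a counterexample to Conjecture C2. -/
theorem minimal_counterexample_C4_reverse_not_counterexample_C2
    {n : ℕ} (hn : 0 < n) (D : SimpleDigraph (Fin n))
    (hD : ¬ ∃ w : Fin n → ℝ, (∀ i, 0 ≤ w i) ∧ w ≠ 0 ∧ D.sMatrix *ᵥ w ≤ 0)
    (hmin : ∀ (m : ℕ), 0 < m → ∀ E : SimpleDigraph (Fin m),
      E.numArcs < D.numArcs →
      ∃ w : Fin m → ℝ, (∀ i, 0 ≤ w i) ∧ w ≠ 0 ∧ E.sMatrix *ᵥ w ≤ 0) :
    (∃ i : Fin n, (D.sMatrixᵀ *ᵥ fun _ => (1 : ℝ)) i ≤ 0) ∧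
    ∃ v : Fin n, D.inDeg v ≤ D.inDeg2 v := by
  classical
  have main : ∃ v, D.inDeg v ≤ D.inDeg2 v := by
    by_contra hcon
    push_neg at hcon
    -- hcon : ∀ v, D.inDeg2 v < D.inDeg v
    have HR : ∀ j, (1:ℝ) ≤ ∑ i, D.sMatrix i j := by
      intro j
      rw [colsum]
      have h1 : D.inDeg2 j + 1 ≤ D.inDeg j := hcon j
      have h2 : ((D.inDeg2 j : ℝ) + 1) ≤ (D.inDeg j : ℝ) := by exact_mod_cast h1
      linarith
    -- every vertex has an in-neighbor
    have hin1 : ∀ v, ∃ u, D.Adj u v := by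
      intro v
      have h1 : 1 ≤ D.inDeg v := by have := hcon v; omega
      rw [inDeg_eq] at h1
      obtain ⟨u, hu⟩ := Finset.card_pos.mp h1
      exact ⟨u, (Finset.mem_filter.mp hu).2⟩
    -- every vertex has at least two in-neighbors
    have step2 : ∀ v, 2 ≤ D.inDeg v := by
      intro v
      by_contra hlt
      push_neg at hlt
      have h1 : 1 ≤ D.inDeg v := by have := hcon v; omega
      have hveq : D.inDeg v = 1 := by omega
      have h2v : D.inDeg2 v = 0 := by have := hcon v; omega
      have hcard1 : (Finset.univ.filter (fun u => D.Adj u v)).card = 1 := by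
        rw [← inDeg_eq]; exact hveq
      obtain ⟨u₀, hu₀⟩ := Finset.card_eq_one.mp hcard1
      have hadj_u₀ : D.Adj u₀ v := by
        have h := hu₀ ▸ Finset.mem_singleton_self u₀
        exact (Finset.mem_filter.mp h).2
      have huniq : ∀ x, D.Adj x v → x = u₀ := by
        intro x hx
        have h : x ∈ Finset.univ.filter (fun u => D.Adj u v) :=
          Finset.mem_filter.mpr ⟨Finset.mem_univ x, hx⟩
        rw [hu₀] at h
        exact Finset.mem_singleton.mp h
      have hno2 : ∀ x, ¬ D.DistTwo x v := by
        intro x hx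
        have h : x ∈ Finset.univ.filter (fun u => D.DistTwo u v) :=
          Finset.mem_filter.mpr ⟨Finset.mem_univ x, hx⟩
        have h0 : (Finset.univ.filter (fun u => D.DistTwo u v)).card = 0 := by
          rw [← inDeg2_eq]; exact h2v
        rw [Finset.card_eq_zero] at h0
        rw [h0] at h
        exact absurd h (Finset.notMem_empty x)
      obtain ⟨x, hx⟩ := hin1 u₀
      have hxv : x ≠ v := by
        rintro rfl
        exact D.no_opposite u₀ x hadj_u₀ hx
      have hxnadj : ¬ D.Adj x v := by
        intro h
        have hxe := huniq x h
        subst hxe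
        exact D.loopless x hx
      exact hno2 x ⟨hxv, hxnadj, u₀, hx, hadj_u₀⟩
    by_cases hsink : ∃ u, ∀ x, ¬ D.Adj u x
    · -- SINK CASE: delete the sink vertex
      obtain ⟨u, hu⟩ := hsink
      have hrow : ∀ x, D.sMatrix u x = 0 := by
        intro x
        rw [sApply, if_neg (hu x), if_neg]
        rintro ⟨-, -, w, hw, -⟩
        exact hu w hw
      obtain ⟨x₀, hx₀⟩ := hin1 u
      have hx₀u : x₀ ≠ u := fun h => D.loopless u (h ▸ hx₀)
      obtain ⟨k, rfl⟩ : ∃ k, n = k + 1 := ⟨n - 1, by omega⟩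
      have hk : 0 < k := by
        by_contra hk0
        have hk0' : k = 0 := by omega
        subst hk0'
        have hb1 := x₀.isLt
        have hb2 := u.isLt
        exact hx₀u (Fin.ext (by omega))
      set E := delVert D u with hE
      have harcs : E.numArcs < D.numArcs := by
        refine numArcs_lt D E (fun p => (u.succAbove p.1, u.succAbove p.2))
          ?_ ?_ (x₀, u) hx₀ ?_
        · intro p q hpq
          have h1 : u.succAbove p.1 = u.succAbove q.1 := congrArg Prod.fst hpq
          have h2 : u.succAbove p.2 = u.succAbove q.2 := congrArg Prod.snd hpq
          exact Prod.ext (Fin.succAbove_right_injective h1)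
            (Fin.succAbove_right_injective h2)
        · intro p hp; exact hp
        · intro p hp hgp
          have h3 : u.succAbove p.2 = u := congrArg Prod.snd hgp
          exact Fin.succAbove_ne u p.2 h3
      have hent : ∀ i j, D.sMatrix (u.succAbove i) (u.succAbove j) ≤ E.sMatrix i j := by
        intro i j
        by_cases h1 : D.Adj (u.succAbove i) (u.succAbove j)
        · rw [s_adj h1, s_adj (show E.Adj i j from h1)]
        · by_cases h2 : D.DistTwo (u.succAbove i) (u.succAbove j)
          · rw [sApply D, if_neg h1, if_pos h2]
            exact neg_one_le_s E i j
          · rw [sApply D, if_neg h1, if_neg h2, sApply E]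
            split_ifs with e1 e2
            · norm_num
            · exfalso
              obtain ⟨hne, hnadj, x, hxa, hxb⟩ := e2
              exact h2 ⟨fun h => hne (Fin.succAbove_right_injective h),
                h1, u.succAbove x, hxa, hxb⟩
            · exact le_refl 0
      have hcert : ∀ j, 0 < ∑ i, E.sMatrix i j * (fun _ => (1:ℝ)) i := by
        intro j
        have hb1 : ∑ i, D.sMatrix (u.succAbove i) (u.succAbove j)
            ≤ ∑ i, E.sMatrix i j :=
          Finset.sum_le_sum fun i _ => hent i j
        have hb2 : ∑ i : Fin (k+1), D.sMatrix i (u.succAbove j)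
            = D.sMatrix u (u.succAbove j)
              + ∑ i : Fin k, D.sMatrix (u.succAbove i) (u.succAbove j) :=
          Fin.sum_univ_succAbove (fun i => D.sMatrix i (u.succAbove j)) u
        have hb3 : (1:ℝ) ≤ ∑ i : Fin (k+1), D.sMatrix i (u.succAbove j) :=
          HR (u.succAbove j)
        rw [hrow] at hb2
        simp only [mul_one]
        linarith
      exact no_witness_of_cert E (fun _ => 1) (fun _ => zero_le_one) hcert
        (hmin k hk E harcs)
    · -- no sink
      push_neg at hsink
      -- hsink : ∀ u, ∃ x, D.Adj u x
      by_cases hP : ∀ a b, D.Adj a b → ∃ x, D.Adj a x ∧ D.Adj x b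
      · -- MAIN CASE
        -- every vertex has at least 3 in-neighbors
        have step3 : ∀ v, 3 ≤ (Finset.univ.filter (fun u => D.Adj u v)).card := by
          intro v
          by_contra hlt
          push_neg at hlt
          have h2 : (Finset.univ.filter (fun u => D.Adj u v)).card = 2 := by
            have h3 := step2 v
            rw [inDeg_eq] at h3
            omega
          obtain ⟨u₁, u₂, hne12, hpair⟩ := Finset.card_eq_two.mp h2
          have hadj1 : D.Adj u₁ v := by
            have h : u₁ ∈ Finset.univ.filter (fun u => D.Adj u v) := by
              rw [hpair]; exact Finset.mem_insert_self _ _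
            exact (Finset.mem_filter.mp h).2
          have hadj2 : D.Adj u₂ v := by
            have h : u₂ ∈ Finset.univ.filter (fun u => D.Adj u v) := by
              rw [hpair]; exact Finset.mem_insert_of_mem (Finset.mem_singleton_self _)
            exact (Finset.mem_filter.mp h).2
          obtain ⟨x, hx1, hx2⟩ := hP u₁ v hadj1
          have hxmem : x ∈ ({u₁, u₂} : Finset (Fin n)) := by
            rw [← hpair]
            exact Finset.mem_filter.mpr ⟨Finset.mem_univ x, hx2⟩
          have hx12 : D.Adj u₁ u₂ := by
            rcases Finset.mem_insert.mp hxmem with h | h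
            · subst h; exact absurd hx1 (D.loopless _)
            · rw [Finset.mem_singleton] at h
              subst h; exact hx1
          obtain ⟨y, hy1, hy2⟩ := hP u₂ v hadj2
          have hymem : y ∈ ({u₁, u₂} : Finset (Fin n)) := by
            rw [← hpair]
            exact Finset.mem_filter.mpr ⟨Finset.mem_univ y, hy2⟩
          have hy21 : D.Adj u₂ u₁ := by
            rcases Finset.mem_insert.mp hymem with h | h
            · subst h; exact hy1
            · rw [Finset.mem_singleton] at h
              subst h; exact absurd hy1 (D.loopless _)
          exact D.no_opposite u₁ u₂ hx12 hy21
        -- find a vertex with out-degree ≥ 3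
        have hsum : ∑ v, (Finset.univ.filter (fun u => D.Adj u v)).card
            = ∑ v, (Finset.univ.filter (fun x => D.Adj v x)).card := by
          simp only [Finset.card_filter]
          rw [Finset.sum_comm]
        obtain ⟨vs, hv3⟩ : ∃ v, 3 ≤ (Finset.univ.filter (fun x => D.Adj v x)).card := by
          by_contra hc
          push_neg at hc
          have hle : ∑ v, (Finset.univ.filter (fun x => D.Adj v x)).card ≤ 2 * n := by
            calc ∑ v, (Finset.univ.filter (fun x => D.Adj v x)).card
                ≤ ∑ _v : Fin n, 2 := Finset.sum_le_sum fun v _ => by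
                  have := hc v; omega
              _ = 2 * n := by simp [mul_comm]
          have hge : 3 * n ≤ ∑ v, (Finset.univ.filter (fun u => D.Adj u v)).card := by
            calc 3 * n = ∑ _v : Fin n, 3 := by simp [mul_comm]
              _ ≤ _ := Finset.sum_le_sum fun v _ => step3 v
          rw [hsum] at hge
          omega
        -- the key family of probability vectors
        have key : ∀ u : Fin n, ∃ w : Fin n → ℝ, (∀ i, 0 ≤ w i) ∧ (∑ j, w j = 1) ∧
            (∀ i, (∑ j, D.sMatrix i j * w j) = if i = u then 1 else 0) := by
          intro u
          obtain ⟨xu, hxu⟩ := hsink u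
          set E := delOut D u with hEdef
          have harcs : E.numArcs < D.numArcs := by
            refine numArcs_lt D E id Function.injective_id ?_ (u, xu) hxu ?_
            · intro p hp; exact hp.1
            · intro p hp hgp
              have h1 : p.1 = u := congrArg Prod.fst hgp
              exact hp.2 h1
          obtain ⟨w, hw0, hwne, hwle⟩ := hmin n hn E harcs
          set c : ℝ := ∑ j, w j with hcdef
          have hc0 : 0 < c := by
            obtain ⟨j₁, hj₁⟩ : ∃ j, 0 < w j := by
              by_contra hcc
              push_neg at hcc
              exact hwne (funext fun j => le_antisymm (hcc j) (hw0 j))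
            have h4 := Finset.single_le_sum (fun j _ => hw0 j) (Finset.mem_univ j₁)
            rw [← hcdef] at h4
            linarith
          have hs_le : ∀ i, i ≠ u → (∑ j, D.sMatrix i j * w j) ≤ 0 := by
            intro i hi
            have h1 : ∀ j, D.sMatrix i j * w j ≤ E.sMatrix i j * w j := by
              intro j
              apply mul_le_mul_of_nonneg_right _ (hw0 j)
              apply entry_mono
              · intro h; exact ⟨h, hi⟩
              · rintro ⟨hne, hnadj, x, hx1, hx2⟩
                by_cases hd : D.Adj i j
                · exact Or.inr hd
                · exact Or.inl ⟨hne, hd, x, hx1.1, hx2.1⟩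
            have h2 : (∑ j, E.sMatrix i j * w j) ≤ 0 := hwle i
            calc (∑ j, D.sMatrix i j * w j)
                ≤ ∑ j, E.sMatrix i j * w j := Finset.sum_le_sum fun j _ => h1 j
              _ ≤ 0 := h2
          have hsu_le : (∑ j, D.sMatrix u j * w j) ≤ c := by
            rw [hcdef]
            apply Finset.sum_le_sum
            intro j _
            calc D.sMatrix u j * w j ≤ 1 * w j :=
                mul_le_mul_of_nonneg_right (s_le_one D u j) (hw0 j)
              _ = w j := one_mul _
          have htot : c ≤ ∑ i, ∑ j, D.sMatrix i j * w j := by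
            rw [Finset.sum_comm, hcdef]
            apply Finset.sum_le_sum
            intro j _
            have h1 : (1:ℝ) * w j ≤ (∑ i, D.sMatrix i j) * w j :=
              mul_le_mul_of_nonneg_right (HR j) (hw0 j)
            rw [one_mul] at h1
            calc w j ≤ (∑ i, D.sMatrix i j) * w j := h1
              _ = ∑ i, D.sMatrix i j * w j := by rw [Finset.sum_mul]
          have hsplit : ∑ i, (∑ j, D.sMatrix i j * w j)
              = (∑ j, D.sMatrix u j * w j)
                + ∑ i ∈ Finset.univ.erase u, (∑ j, D.sMatrix i j * w j) :=
            (Finset.add_sum_erase Finset.univ _ (Finset.mem_univ u)).symm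
          have hTle : ∑ i ∈ Finset.univ.erase u, (∑ j, D.sMatrix i j * w j) ≤ 0 :=
            Finset.sum_nonpos fun i hi => hs_le i (Finset.mem_erase.mp hi).1
          have hsu : (∑ j, D.sMatrix u j * w j) = c := by
            rw [hsplit] at htot
            linarith
          have hT0 : ∑ i ∈ Finset.univ.erase u, (∑ j, D.sMatrix i j * w j) = 0 := by
            rw [hsplit, hsu] at htot
            linarith
          have hzero : ∀ i, i ≠ u → (∑ j, D.sMatrix i j * w j) = 0 := by
            intro i hi
            exact (Finset.sum_eq_zero_iff_of_nonpos
              (fun i' hi' => hs_le i' (Finset.mem_erase.mp hi').1)).mp hT0 i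
              (Finset.mem_erase.mpr ⟨hi, Finset.mem_univ i⟩)
          refine ⟨fun j => c⁻¹ * w j,
            fun j => mul_nonneg (inv_nonneg.mpr (le_of_lt hc0)) (hw0 j), ?_, ?_⟩
          · rw [← Finset.mul_sum, ← hcdef]
            exact inv_mul_cancel₀ (ne_of_gt hc0)
          · intro i
            have h1 : ∑ j, D.sMatrix i j * (c⁻¹ * w j)
                = c⁻¹ * ∑ j, D.sMatrix i j * w j := by
              rw [Finset.mul_sum]
              exact Finset.sum_congr rfl fun j _ => by ring
            rw [h1]
            by_cases hi : i = u
            · subst hi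
              rw [hsu, if_pos rfl]
              exact inv_mul_cancel₀ (ne_of_gt hc0)
            · rw [hzero i hi, if_neg hi, mul_zero]
        choose what hwh0 hwh1 hwhS using key
        set M : Fin n → ℝ := fun i => ∑ u, what u i with hMdef
        clear_value M
        have hM0 : ∀ i, 0 ≤ M i := by
          intro i
          simp only [hMdef]
          exact Finset.sum_nonneg fun u _ => hwh0 u i
        have hMn : ∀ i, M i ≤ n := by
          intro i
          calc M i = ∑ u, what u i := by simp only [hMdef]
            _ ≤ ∑ _u : Fin n, 1 := Finset.sum_le_sum fun u _ => by
                have h1 : what u i ≤ ∑ j, what u j :=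
                  Finset.single_le_sum (fun j _ => hwh0 u j) (Finset.mem_univ i)
                rw [hwh1 u] at h1
                exact h1
            _ = n := by simp
        have hSM : ∀ j, ∑ x, D.sMatrix j x * M x = 1 := by
          intro j
          calc ∑ x, D.sMatrix j x * M x
              = ∑ x, ∑ u, D.sMatrix j x * what u x := by
                apply Finset.sum_congr rfl
                intro x _
                simp only [hMdef]
                rw [Finset.mul_sum]
            _ = ∑ u, ∑ x, D.sMatrix j x * what u x := Finset.sum_comm
            _ = ∑ u, (if j = u then (1:ℝ) else 0) :=
                Finset.sum_congr rfl fun u _ => hwhS u j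
            _ = 1 := by simp
        -- choose the minimizing out-neighbor
        set N := Finset.univ.filter (fun x => D.Adj vs x) with hNdef
        have hNne : N.Nonempty := Finset.card_pos.mp (by omega)
        obtain ⟨us, husmem, husmin⟩ := Finset.exists_min_image N (what vs) hNne
        have husadj : D.Adj vs us := (Finset.mem_filter.mp husmem).2
        have hus13 : what vs us ≤ 1/3 := by
          have h3 : 3 ≤ N.card := hv3
          have hsmul : N.card • what vs us ≤ ∑ x ∈ N, what vs x :=
            Finset.card_nsmul_le_sum N _ _ (fun x hx => husmin x hx)
          have hNsum : ∑ x ∈ N, what vs x ≤ 1 := by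
            rw [← hwh1 vs]
            exact Finset.sum_le_sum_of_subset_of_nonneg (Finset.subset_univ N)
              (fun i _ _ => hwh0 vs i)
          have h0 : 0 ≤ what vs us := hwh0 vs us
          have hcast : (3:ℝ) * what vs us ≤ (N.card : ℝ) * what vs us := by
            apply mul_le_mul_of_nonneg_right _ h0
            exact_mod_cast h3
          rw [nsmul_eq_mul] at hsmul
          linarith
        set ε : ℝ := 1/(12 * n) with hεdef
        clear_value ε
        have hnr : (0:ℝ) < n := by exact_mod_cast hn
        have hε : 0 < ε := by
          rw [hεdef]
          positivity
        have hεn : ε * n = 1/12 := by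
          rw [hεdef]
          field_simp
        set Y : Fin n → ℝ := fun i => ε * M i + what vs i with hYdef
        clear_value Y
        have hY0 : ∀ i, 0 ≤ Y i := by
          intro i
          simp only [hYdef]
          exact add_nonneg (mul_nonneg (le_of_lt hε) (hM0 i)) (hwh0 vs i)
        have hYus : Y us ≤ ε * n + 1/3 := by
          have h1 : ε * M us ≤ ε * n := mul_le_mul_of_nonneg_left (hMn us) (le_of_lt hε)
          simp only [hYdef]
          linarith [hus13]
        have hSY : ∀ j, ∑ i, D.sMatrix j i * Y i
            = ε + (if j = vs then (1:ℝ) else 0) := by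
          intro j
          calc ∑ i, D.sMatrix j i * Y i
              = ∑ i, (ε * (D.sMatrix j i * M i) + D.sMatrix j i * what vs i) := by
                apply Finset.sum_congr rfl
                intro i _
                simp only [hYdef]
                ring
            _ = ε * (∑ i, D.sMatrix j i * M i) + ∑ i, D.sMatrix j i * what vs i := by
                rw [Finset.sum_add_distrib, Finset.mul_sum]
            _ = ε + (if j = vs then (1:ℝ) else 0) := by
                rw [hSM j, hwhS vs j, mul_one]
        set E := revDel D us vs with hEdef
        have harcs : E.numArcs < D.numArcs := by
          refine numArcs_lt D E Prod.swap Prod.swap_injective ?_ (vs, us) husadj ?_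
          · intro p hp; exact hp.1
          · intro p hp hgp
            have h1 : p.2 = vs := congrArg Prod.fst hgp
            have h2 : p.1 = us := congrArg Prod.snd hgp
            exact hp.2 ⟨h2, h1⟩
        have hent : ∀ i j, D.sMatrix j i - (if i = us ∧ j = vs then 2 else 0)
            ≤ E.sMatrix i j := by
          intro i j
          by_cases hij : i = us ∧ j = vs
          · rw [if_pos hij, s_adj (show D.Adj j i by rw [hij.1, hij.2]; exact husadj)]
            have h1 := neg_one_le_s E i j
            linarith
          · rw [if_neg hij, sub_zero]
            by_cases h1 : D.Adj j i
            · have hEa : E.Adj i j := ⟨h1, hij⟩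
              rw [s_adj hEa]
              exact s_le_one D j i
            · by_cases h2 : D.DistTwo j i
              · rw [sApply D, if_neg h1, if_pos h2]
                exact neg_one_le_s E i j
              · rw [sApply D, if_neg h1, if_neg h2, sApply E]
                split_ifs with e1 e2
                · norm_num
                · exfalso
                  obtain ⟨hne, hnadj, x, hxa, hxb⟩ := e2
                  exact h2 ⟨Ne.symm hne, h1, x, hxb.1, hxa.1⟩
                · exact le_refl 0
        have hcert : ∀ j, 0 < ∑ i, E.sMatrix i j * Y i := by
          intro j
          have hb1 : ∑ i, (D.sMatrix j i - (if i = us ∧ j = vs then 2 else 0)) * Y i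
              ≤ ∑ i, E.sMatrix i j * Y i :=
            Finset.sum_le_sum fun i _ =>
              mul_le_mul_of_nonneg_right (hent i j) (hY0 i)
          have hb2 : ∑ i, (D.sMatrix j i - (if i = us ∧ j = vs then 2 else 0)) * Y i
              = (∑ i, D.sMatrix j i * Y i)
                - (if j = vs then 2 * Y us else 0) := by
            have h1 : ∀ i : Fin n,
                (D.sMatrix j i - (if i = us ∧ j = vs then 2 else 0)) * Y i
                = D.sMatrix j i * Y i
                  - (if i = us ∧ j = vs then (2:ℝ) else 0) * Y i := fun i => by ring
            rw [Finset.sum_congr rfl fun i _ => h1 i, Finset.sum_sub_distrib]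
            congr 1
            by_cases hj : j = vs
            · subst hj
              rw [if_pos rfl]
              calc ∑ i, (if i = us ∧ j = j then (2:ℝ) else 0) * Y i
                  = ∑ i, (if i = us then 2 * Y i else 0) := by
                    apply Finset.sum_congr rfl
                    intro i _
                    by_cases hia : i = us <;> simp [hia]
                _ = 2 * Y us := by
                    rw [Finset.sum_ite_eq' Finset.univ us (fun i => 2 * Y i)]
                    simp
            · rw [if_neg hj]
              apply Finset.sum_eq_zero
              intro i _
              rw [if_neg (fun h => hj h.2), zero_mul]
          rw [hb2, hSY j] at hb1
          by_cases hj : j = vs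
          · rw [if_pos hj, if_pos hj] at hb1
            -- Σ E ≥ ε + 1 - 2·Y us ≥ ε + 1 - 2(εn + 1/3) = ε + 1/3 - 1/6 > 0
            have h5 : ε + 1 - 2 * Y us ≤ ∑ i, E.sMatrix i j * Y i := by linarith
            have h6 : 2 * Y us ≤ 2 * (ε * n + 1/3) := by linarith
            rw [hεn] at h6
            have hfin : (0:ℝ) < ε + 1 - 2 * Y us := by linarith [h6, hε]
            exact lt_of_lt_of_le hfin h5
          · rw [if_neg hj, if_neg hj] at hb1
            linarith
        exact no_witness_of_cert E Y hY0 hcert (hmin n hn E harcs)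
      · -- CASE: some arc has no 2-path shortcut
        push_neg at hP
        obtain ⟨a, b, hab, hmid⟩ := hP
        have hcard : 1 < (Finset.univ.filter (fun u => D.Adj u b)).card := by
          have h1 := step2 b
          rw [inDeg_eq] at h1
          omega
        obtain ⟨i₀, hi₀mem, hi₀ne⟩ := Finset.exists_mem_ne hcard a
        have hi₀ : D.Adj i₀ b := (Finset.mem_filter.mp hi₀mem).2
        set E := delArc D a b with hEdef
        have harcs : E.numArcs < D.numArcs := by
          refine numArcs_lt D E id Function.injective_id ?_ (a, b) hab ?_
          · intro p hp; exact hp.1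
          · intro p hp hgp
            apply hp.2
            exact ⟨congrArg Prod.fst hgp, congrArg Prod.snd hgp⟩
        set Y : Fin n → ℝ := fun i => 1 + (if i = i₀ then 1/2 else 0) with hYdef
        clear_value Y
        have hY0 : ∀ i, 0 ≤ Y i := by
          intro i
          simp only [hYdef]
          split_ifs <;> norm_num
        have hYa : Y a = 1 := by
          simp only [hYdef]
          rw [if_neg (fun h : a = i₀ => hi₀ne h.symm)]
          norm_num
        have hent : ∀ i j, D.sMatrix i j - (if i = a ∧ j = b then 1 else 0)
            ≤ E.sMatrix i j := by
          intro i j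
          by_cases hij : i = a ∧ j = b
          · obtain ⟨rfl, rfl⟩ := hij
            rw [if_pos ⟨rfl, rfl⟩, s_adj hab]
            have hEne : ¬ E.Adj i j := fun h => h.2 ⟨rfl, rfl⟩
            have hEn2 : ¬ E.DistTwo i j := by
              rintro ⟨-, -, x, hx1, hx2⟩
              exact hmid x hx1.1 hx2.1
            rw [sApply E, if_neg hEne, if_neg hEn2]
            norm_num
          · rw [if_neg hij, sub_zero]
            apply entry_mono
            · intro h; exact ⟨h, hij⟩
            · rintro ⟨hne, hnadj, x, hx1, hx2⟩
              by_cases hd : D.Adj i j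
              · exact Or.inr hd
              · exact Or.inl ⟨hne, hd, x, hx1.1, hx2.1⟩
        have hSDY : ∀ j, ∑ i, D.sMatrix i j * Y i
            = (∑ i, D.sMatrix i j) + 1/2 * D.sMatrix i₀ j := by
          intro j
          calc ∑ i, D.sMatrix i j * Y i
              = ∑ i, (D.sMatrix i j + (if i = i₀ then D.sMatrix i j * (1/2) else 0)) := by
                apply Finset.sum_congr rfl
                intro i _
                simp only [hYdef]
                split_ifs <;> ring
            _ = (∑ i, D.sMatrix i j)
                + ∑ i, (if i = i₀ then D.sMatrix i j * (1/2) else 0) :=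
                Finset.sum_add_distrib
            _ = (∑ i, D.sMatrix i j) + 1/2 * D.sMatrix i₀ j := by
                rw [Finset.sum_ite_eq' Finset.univ i₀ (fun i => D.sMatrix i j * (1/2))]
                simp [mul_comm]
        have hcert : ∀ j, 0 < ∑ i, E.sMatrix i j * Y i := by
          intro j
          have hb1 : ∑ i, (D.sMatrix i j - (if i = a ∧ j = b then 1 else 0)) * Y i
              ≤ ∑ i, E.sMatrix i j * Y i :=
            Finset.sum_le_sum fun i _ =>
              mul_le_mul_of_nonneg_right (hent i j) (hY0 i)
          have hb2 : ∑ i, (D.sMatrix i j - (if i = a ∧ j = b then 1 else 0)) * Y i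
              = (∑ i, D.sMatrix i j * Y i) - (if j = b then Y a else 0) := by
            have h1 : ∀ i : Fin n,
                (D.sMatrix i j - (if i = a ∧ j = b then 1 else 0)) * Y i
                = D.sMatrix i j * Y i
                  - (if i = a ∧ j = b then (1:ℝ) else 0) * Y i := fun i => by ring
            rw [Finset.sum_congr rfl fun i _ => h1 i, Finset.sum_sub_distrib]
            congr 1
            by_cases hj : j = b
            · subst hj
              rw [if_pos rfl]
              calc ∑ i, (if i = a ∧ j = j then (1:ℝ) else 0) * Y i
                  = ∑ i, (if i = a then Y i else 0) := by
                    apply Finset.sum_congr rfl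
                    intro i _
                    by_cases hia : i = a <;> simp [hia]
                _ = Y a := by
                    rw [Finset.sum_ite_eq' Finset.univ a Y]
                    simp
            · rw [if_neg hj]
              apply Finset.sum_eq_zero
              intro i _
              rw [if_neg (fun h => hj h.2), zero_mul]
          rw [hb2, hSDY j] at hb1
          by_cases hj : j = b
          · rw [if_pos hj, hYa] at hb1
            have h3 := HR j
            have h4 : D.sMatrix i₀ j = 1 := by rw [hj]; exact s_adj hi₀
            rw [h4] at hb1
            linarith
          · rw [if_neg hj] at hb1
            have h3 := HR j
            have h4 := neg_one_le_s D i₀ j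
            linarith
        exact no_witness_of_cert E Y hY0 hcert (hmin n hn E harcs)
  obtain ⟨v, hv⟩ := main
  constructor
  · refine ⟨v, ?_⟩
    have h1 : (D.sMatrixᵀ *ᵥ fun _ => (1 : ℝ)) v = ∑ j, D.sMatrix j v := by
      have h2 : (D.sMatrixᵀ *ᵥ fun _ => (1 : ℝ)) v
          = ∑ j, D.sMatrixᵀ v j * 1 := rfl
      rw [h2]
      exact Finset.sum_congr rfl fun j _ => by rw [Matrix.transpose_apply, mul_one]
    rw [h1, colsum]
    have h2 : (D.inDeg v : ℝ) ≤ (D.inDeg2 v : ℝ) := by exact_mod_cast hv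
    linarith
  · exact ⟨v, hv⟩
end
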